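/- arXiv:0901.1228 — 8 statements merged into one kernel-verified Lean document; each statement's English description precedes it below -/
import Mathlib

section
/- Let m ≥ 2. The map sending a numerical semigroup S of multiplicity m with Apéry set Ap(S,m) = {0, k₁m+1, ..., k_{m-1}m+(m-1)} to (k₁,...,k_{m-1}) is a bijection between the set of numerical semigroups of multiplicity m and the set of integer tuples (x₁,...,x_{m-1}) ∈ ℤ^{m-1} satisfying: xᵢ ≥ 1 for all i; xᵢ + xⱼ − x_{i+j} ≥ 0 for all 1 ≤ i ≤ j ≤ m−1 with i+j ≤ m−1; and xᵢ + xⱼ − x_{i+j−m} ≥ −1 for all 1 ≤ i ≤ j ≤ m−1 with i+j > m. -/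
/-- A numerical semigroup: a subset of ℕ containing 0, closed under addition,
with finite complement. -/
def IsNumericalSemigroup (S : Set ℕ) : Prop :=
  0 ∈ S ∧ (∀ a ∈ S, ∀ b ∈ S, a + b ∈ S) ∧ Sᶜ.Finite

/-- The Apéry set of `S` with respect to `n`: elements `s ∈ S` with `s - n ∉ S`. -/
def AperySet (S : Set ℕ) (n : ℕ) : Set ℕ :=
  {s ∈ S | ∀ t ∈ S, s ≠ t + n}

/-- The multiplicity of `S`: the least nonzero element. -/
noncomputable def sgpMult (S : Set ℕ) : ℕ := sInf (S \ {0})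

/-- The genus of `S`: the number of gaps. -/
noncomputable def sgpGenus (S : Set ℕ) : ℕ := Set.ncard Sᶜ

/-- The Frobenius number of `S`: the largest gap. -/
noncomputable def sgpFrob (S : Set ℕ) : ℕ := sSup Sᶜ

/-- The set of minimal generators of `S`: nonzero elements not expressible as a
sum of two nonzero elements of `S`. -/
def MinGens (S : Set ℕ) : Set ℕ :=
  {s ∈ S | s ≠ 0 ∧ ∀ a ∈ S \ {0}, ∀ b ∈ S \ {0}, s ≠ a + b}

/-- The embedding dimension of `S`. -/
noncomputable def sgpEdim (S : Set ℕ) : ℕ := Set.ncard (MinGens S)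

/-- `S` has maximal embedding dimension. -/
def IsMED (S : Set ℕ) : Prop := sgpEdim S = sgpMult S

/-- The Kunz coordinates of a numerical semigroup `S` of multiplicity `m`:
for `1 ≤ i ≤ m-1`, `kunzCoords S m i = kᵢ` where `kᵢ·m + i` is the least
element of `S` congruent to `i` modulo `m`; it is `0` elsewhere. -/
noncomputable def kunzCoords (S : Set ℕ) (m : ℕ) : ℕ → ℤ := fun i =>
  if 1 ≤ i ∧ i ≤ m - 1 then (((sInf {s ∈ S | s % m = i} : ℕ) : ℤ) - i) / m else 0

/-- The Kunz polyhedron for multiplicity `m` (with coordinates supported on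
`{1, …, m-1}`). -/
def KunzPolyhedron (m : ℕ) : Set (ℕ → ℤ) :=
  {x | (∀ i, 1 ≤ i → i ≤ m - 1 → 1 ≤ x i) ∧
       (∀ i j, 1 ≤ i → i ≤ j → j ≤ m - 1 → i + j ≤ m - 1 →
          x i + x j - x (i + j) ≥ 0) ∧
       (∀ i j, 1 ≤ i → i ≤ j → j ≤ m - 1 → i + j > m →
          x i + x j - x (i + j - m) ≥ -1) ∧
       (∀ i, ¬ (1 ≤ i ∧ i ≤ m - 1) → x i = 0)}

namespace KunzAux

lemma exists_bound {S : Set ℕ} (h : Sᶜ.Finite) : ∃ N, ∀ n, N ≤ n → n ∈ S := by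
  obtain ⟨N, hN⟩ := h.bddAbove
  refine ⟨N + 1, fun n hn => ?_⟩
  by_contra hc
  exact absurd (hN hc) (by omega)

lemma nonempty_res {S : Set ℕ} (h : Sᶜ.Finite) {m i : ℕ} (hi : i < m) :
    {s ∈ S | s % m = i}.Nonempty := by
  obtain ⟨N, hN⟩ := exists_bound h
  refine ⟨(N + 1) * m + i, hN _ ?_, ?_⟩
  · have : 1 ≤ m := by omega
    nlinarith
  · rw [Nat.add_comm, Nat.add_mul_mod_self_right, Nat.mod_eq_of_lt hi]

lemma mult_mem {S : Set ℕ} {m : ℕ} (hS : IsNumericalSemigroup S)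
    (hmS : sgpMult S = m) : m ∈ S ∧ ∀ n ∈ S, n ≠ 0 → m ≤ n := by
  obtain ⟨N, hN⟩ := exists_bound hS.2.2
  have hne : (S \ {0}).Nonempty := ⟨N + 1, hN _ (by omega), by simp⟩
  have hmem := Nat.sInf_mem hne
  rw [sgpMult] at hmS
  constructor
  · rw [← hmS]; exact hmem.1
  · intro n hn hn0
    rw [← hmS]
    exact Nat.sInf_le ⟨hn, hn0⟩

lemma mul_mem {S : Set ℕ} {m : ℕ} (hS : IsNumericalSemigroup S) (hm : m ∈ S) :
    ∀ k, m * k ∈ S := by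
  intro k
  induction k with
  | zero => simpa using hS.1
  | succ k ih => have := hS.2.1 _ ih _ hm; simpa [Nat.mul_succ] using this

lemma mem_char {S : Set ℕ} {m : ℕ} (hS : IsNumericalSemigroup S)
    (hmS : sgpMult S = m) (hm2 : 2 ≤ m) (n : ℕ) :
    n ∈ S ↔ sInf {s ∈ S | s % m = n % m} ≤ n := by
  have hm0 : 0 < m := by omega
  have hA : {s ∈ S | s % m = n % m}.Nonempty := nonempty_res hS.2.2 (Nat.mod_lt _ hm0)
  have hw := Nat.sInf_mem hA
  constructor
  · intro hn; exact Nat.sInf_le ⟨hn, rfl⟩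
  · intro hle
    set w := sInf {s ∈ S | s % m = n % m} with hwdef
    have h1 : w % m = n % m := hw.2
    have hdvd : m ∣ n - w := by
      have := (Nat.modEq_iff_dvd' hle).mp h1
      exact this
    obtain ⟨t, ht⟩ := hdvd
    have heq : w + m * t = n := by omega
    rw [← heq]
    exact hS.2.1 _ hw.1 _ (mul_mem hS (mult_mem hS hmS).1 t)

lemma w_spec {S : Set ℕ} {m i : ℕ} (hS : IsNumericalSemigroup S)
    (hmS : sgpMult S = m) (hm2 : 2 ≤ m) (hi1 : 1 ≤ i) (him : i ≤ m - 1) :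
    sInf {s ∈ S | s % m = i} ∈ S ∧ sInf {s ∈ S | s % m = i} % m = i ∧
      kunzCoords S m i = ((sInf {s ∈ S | s % m = i} / m : ℕ) : ℤ) ∧
      1 ≤ sInf {s ∈ S | s % m = i} / m ∧
      sInf {s ∈ S | s % m = i} = m * (sInf {s ∈ S | s % m = i} / m) + i := by
  have hm0 : 0 < m := by omega
  have hA : {s ∈ S | s % m = i}.Nonempty := nonempty_res hS.2.2 (by omega)
  have hw := Nat.sInf_mem hA
  set w := sInf {s ∈ S | s % m = i} with hwdef
  have hmod : w % m = i := hw.2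
  have hdm : w = m * (w / m) + i := by
    conv_lhs => rw [← Nat.div_add_mod w m]
    rw [hmod]
  refine ⟨hw.1, hmod, ?_, ?_, hdm⟩
  · rw [kunzCoords]
    simp only [hi1, him, and_self, if_true]
    rw [← hwdef]
    have hz : (w : ℤ) = (m : ℤ) * ((w / m : ℕ) : ℤ) + (i : ℤ) := by exact_mod_cast hdm
    have : ((w : ℤ) - i) = ((w / m : ℕ) : ℤ) * m := by rw [hz]; ring
    rw [this, Int.mul_ediv_cancel _ (by exact_mod_cast hm0.ne')]
  · have hge : m ≤ w := (mult_mem hS hmS).2 w hw.1 (by omega)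
    have hne : w / m ≠ 0 := by
      intro h0
      rw [h0, Nat.mul_zero] at hdm
      omega
    exact Nat.one_le_iff_ne_zero.mpr hne

lemma mem_iff_kunz {S : Set ℕ} {m : ℕ} (hS : IsNumericalSemigroup S)
    (hmS : sgpMult S = m) (hm2 : 2 ≤ m) (n : ℕ) :
    n ∈ S ↔ kunzCoords S m (n % m) * m + ((n % m : ℕ) : ℤ) ≤ (n : ℤ) := by
  have hm0 : 0 < m := by omega
  rcases Nat.eq_zero_or_pos (n % m) with h0 | hpos
  · have hk : kunzCoords S m 0 = 0 := by rw [kunzCoords]; simp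
    rw [h0, hk]
    simp only [zero_mul, Nat.cast_zero, add_zero, zero_add]
    constructor
    · intro _; exact_mod_cast Nat.zero_le n
    · intro _
      have hd : m ∣ n := by omega
      obtain ⟨t, ht⟩ := hd
      rw [ht]
      exact mul_mem hS (mult_mem hS hmS).1 t
  · have hlt : n % m < m := Nat.mod_lt _ hm0
    obtain ⟨hw1, hw2, hk, hk1, -⟩ := w_spec hS hmS hm2 hpos (by omega)
    rw [mem_char hS hmS hm2, hk]
    set w := sInf {s ∈ S | s % m = n % m} with hwdef
    have hdm : w = m * (w / m) + n % m := by
      conv_lhs => rw [← Nat.div_add_mod w m]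
      rw [hw2]
    have hzw : (w : ℤ) = (m : ℤ) * ((w / m : ℕ) : ℤ) + ((n % m : ℕ) : ℤ) := by
      exact_mod_cast hdm
    constructor
    · intro h
      have : (w : ℤ) ≤ n := by exact_mod_cast h
      linarith
    · intro h
      have : (w : ℤ) ≤ n := by rw [hzw]; linarith
      exact_mod_cast this


/-- The numerical semigroup associated to a point of the Kunz polyhedron. -/
def Sof (m : ℕ) (x : ℕ → ℤ) : Set ℕ :=
  {n | x (n % m) * (m : ℤ) + ((n % m : ℕ) : ℤ) ≤ (n : ℤ)}

variable {m : ℕ} {x : ℕ → ℤ}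

lemma poly_ineq1 (hx : x ∈ KunzPolyhedron m) {i j : ℕ} (hi : 1 ≤ i) (hj : 1 ≤ j)
    (hij : i + j ≤ m - 1) : x (i + j) ≤ x i + x j := by
  rcases le_total i j with h | h
  · have := hx.2.1 i j hi h (by omega) hij
    linarith
  · have := hx.2.1 j i hj h (by omega) (by omega)
    rw [Nat.add_comm j i] at this
    linarith

lemma poly_ineq2 (hx : x ∈ KunzPolyhedron m) {i j : ℕ} (hi : 1 ≤ i)
    (him : i ≤ m - 1) (hj : 1 ≤ j) (hjm : j ≤ m - 1) (hij : i + j > m) :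
    x (i + j - m) ≤ x i + x j + 1 := by
  rcases le_total i j with h | h
  · have := hx.2.2.1 i j hi h hjm hij
    linarith
  · have := hx.2.2.1 j i hj h him (by omega)
    rw [Nat.add_comm j i] at this
    linarith

lemma sof_zero (hx : x ∈ KunzPolyhedron m) : (0 : ℕ) ∈ Sof m x := by
  have h0 : x 0 = 0 := hx.2.2.2 0 (by omega)
  simp [Sof, Nat.zero_mod, h0]

lemma sof_mem_of_dvd (hx : x ∈ KunzPolyhedron m) (hm2 : 2 ≤ m) {n : ℕ}
    (h : n % m = 0) : n ∈ Sof m x := by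
  have h0 : x 0 = 0 := hx.2.2.2 0 (by omega)
  simp only [Sof, Set.mem_setOf_eq, h, h0, Nat.cast_zero, zero_mul, add_zero, zero_add]
  exact_mod_cast Nat.zero_le n

lemma sof_add (hx : x ∈ KunzPolyhedron m) (hm2 : 2 ≤ m) :
    ∀ a ∈ Sof m x, ∀ b ∈ Sof m x, a + b ∈ Sof m x := by
  intro a ha b hb
  have hm0 : 0 < m := by omega
  set i := a % m with hidef
  set j := b % m with hjdef
  have hilt : i < m := Nat.mod_lt _ hm0
  have hjlt : j < m := Nat.mod_lt _ hm0
  have ha' : x i * m + (i : ℤ) ≤ a := ha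
  have hb' : x j * m + (j : ℤ) ≤ b := hb
  show x ((a + b) % m) * m + (((a + b) % m : ℕ) : ℤ) ≤ ((a + b : ℕ) : ℤ)
  have hmod : (a + b) % m = (i + j) % m := by
    rw [Nat.add_mod a b]
  rcases Nat.eq_zero_or_pos i with hi0 | hi1
  · -- then residue of a+b is j
    have : (a + b) % m = j := by rw [hmod, hi0]; simpa using Nat.mod_eq_of_lt hjlt
    rw [this]
    have hha : (0 : ℤ) ≤ a := by exact_mod_cast Nat.zero_le a
    push_cast
    linarith
  rcases Nat.eq_zero_or_pos j with hj0 | hj1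
  · have : (a + b) % m = i := by rw [hmod, hj0]; simpa using Nat.mod_eq_of_lt hilt
    rw [this]
    have hhb : (0 : ℤ) ≤ b := by exact_mod_cast Nat.zero_le b
    push_cast
    linarith
  -- both residues ≥ 1
  have hxi : 1 ≤ x i := hx.1 i hi1 (by omega)
  have hxj : 1 ≤ x j := hx.1 j hj1 (by omega)
  rcases lt_trichotomy (i + j) m with hlt | heq | hgt
  · have hr : (a + b) % m = i + j := by rw [hmod]; exact Nat.mod_eq_of_lt hlt
    rw [hr]
    have hineq := poly_ineq1 hx hi1 hj1 (by omega)
    have hcm : (0 : ℤ) ≤ m := by exact_mod_cast Nat.zero_le m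
    push_cast
    push_cast at ha' hb'
    nlinarith
  · have hr : (a + b) % m = 0 := by rw [hmod, heq, Nat.mod_self]
    exact sof_mem_of_dvd hx hm2 hr
  · have hij2 : i + j < 2 * m := by omega
    have hr : (a + b) % m = i + j - m := by
      rw [hmod, Nat.mod_eq_sub_mod (by omega), Nat.mod_eq_of_lt (by omega)]
    rw [hr]
    have hineq := poly_ineq2 hx hi1 (by omega) hj1 (by omega) hgt
    push_cast
    push_cast at ha' hb' hineq
    have hc : ((i + j - m : ℕ) : ℤ) = (i : ℤ) + j - m := by push_cast; omega
    rw [hc]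
    nlinarith

lemma sof_cofinite (hx : x ∈ KunzPolyhedron m) (hm2 : 2 ≤ m) :
    (Sof m x)ᶜ.Finite := by
  have hm0 : 0 < m := by omega
  set C : ℕ := ((Finset.range m).sup fun i => (x i).toNat) * m + m with hC
  apply Set.Finite.subset (Set.finite_Iio C)
  intro n hn
  simp only [Set.mem_compl_iff, Sof, Set.mem_setOf_eq, not_le] at hn
  by_contra hc
  simp only [Set.mem_Iio, not_lt] at hc
  -- n ≥ C implies n ∈ Sof
  have hlt : n % m < m := Nat.mod_lt _ hm0
  have h1 : x (n % m) ≤ ((x (n % m)).toNat : ℤ) := Int.self_le_toNat _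
  have h2 : (x (n % m)).toNat ≤ (Finset.range m).sup fun i => (x i).toNat :=
    Finset.le_sup (f := fun i => (x i).toNat) (Finset.mem_range.mpr hlt)
  have h3 : (x (n % m)).toNat * m + m ≤ C := by
    rw [hC]
    have := Nat.mul_le_mul_right m h2
    omega
  have h4 : x (n % m) * m + ((n % m : ℕ) : ℤ) ≤ (C : ℤ) := by
    have : ((x (n % m)).toNat : ℤ) * m + m ≤ (C : ℤ) := by exact_mod_cast h3
    have hmz : (0 : ℤ) < m := by exact_mod_cast hm0
    nlinarith [h1, (show ((n % m : ℕ) : ℤ) < m by exact_mod_cast hlt)]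
  have : (C : ℤ) ≤ n := by exact_mod_cast hc
  linarith

lemma sof_ns (hx : x ∈ KunzPolyhedron m) (hm2 : 2 ≤ m) :
    IsNumericalSemigroup (Sof m x) :=
  ⟨sof_zero hx, sof_add hx hm2, sof_cofinite hx hm2⟩

lemma sof_mult (hx : x ∈ KunzPolyhedron m) (hm2 : 2 ≤ m) :
    sgpMult (Sof m x) = m := by
  have hm0 : 0 < m := by omega
  have hmmem : m ∈ Sof m x := sof_mem_of_dvd hx hm2 (Nat.mod_self m)
  have hsmall : ∀ n ∈ Sof m x, n ≠ 0 → m ≤ n := by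
    intro n hn hn0
    by_contra hc
    push_neg at hc
    have hr : n % m = n := Nat.mod_eq_of_lt hc
    have hxn : 1 ≤ x n := hx.1 n (by omega) (by omega)
    have hn' : x (n % m) * m + ((n % m : ℕ) : ℤ) ≤ n := hn
    rw [hr] at hn'
    have hmz : (2 : ℤ) ≤ m := by exact_mod_cast hm2
    nlinarith
  rw [sgpMult]
  have h1 : sInf (Sof m x \ {0}) ≤ m := Nat.sInf_le ⟨hmmem, by simp; omega⟩
  have hne : (Sof m x \ {0}).Nonempty := ⟨m, hmmem, by simp; omega⟩
  have hmem := Nat.sInf_mem hne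
  have h2 : m ≤ sInf (Sof m x \ {0}) := hsmall _ hmem.1 (by
    have := hmem.2; simpa using this)
  omega

lemma sof_kunz (hx : x ∈ KunzPolyhedron m) (hm2 : 2 ≤ m) :
    kunzCoords (Sof m x) m = x := by
  have hm0 : 0 < m := by omega
  funext i
  rw [kunzCoords]
  by_cases hi : 1 ≤ i ∧ i ≤ m - 1
  · rw [if_pos hi]
    have hxi : 1 ≤ x i := hx.1 i hi.1 hi.2
    set w0 : ℕ := (x i).toNat * m + i with hw0
    have hxt : ((x i).toNat : ℤ) = x i := Int.toNat_of_nonneg (by omega)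
    have hw0mod : w0 % m = i := by
      rw [hw0, Nat.add_comm, Nat.add_mul_mod_self_right, Nat.mod_eq_of_lt (by omega)]
    have hw0mem : w0 ∈ Sof m x := by
      show x (w0 % m) * m + ((w0 % m : ℕ) : ℤ) ≤ (w0 : ℤ)
      rw [hw0mod, hw0]
      push_cast
      rw [hxt]
    have hsinf : sInf {s ∈ Sof m x | s % m = i} = w0 := by
      have hA : {s ∈ Sof m x | s % m = i}.Nonempty := ⟨w0, hw0mem, hw0mod⟩
      obtain ⟨hs, hsmod⟩ := Nat.sInf_mem hA
      have hub : w0 ∈ {s ∈ Sof m x | s % m = i} := ⟨hw0mem, hw0mod⟩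
      apply le_antisymm (Nat.sInf_le hub)
      set v : ℕ := sInf {s ∈ Sof m x | s % m = i} with hv
      have hs' : x (v % m) * m + ((v % m : ℕ) : ℤ) ≤ (v : ℤ) := hs
      rw [hsmod] at hs'
      have : (w0 : ℤ) ≤ (v : ℤ) := by
        rw [hw0]
        push_cast
        rw [hxt]
        exact hs'
      exact_mod_cast this
    rw [hsinf, hw0]
    have : (((x i).toNat * m + i : ℕ) : ℤ) - i = x i * m := by push_cast; rw [hxt]; ring
    rw [this, Int.mul_ediv_cancel _ (by exact_mod_cast hm0.ne')]
  · rw [if_neg hi]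
    exact (hx.2.2.2 i hi).symm


lemma maps_to {S : Set ℕ} {m : ℕ} (hS : IsNumericalSemigroup S)
    (hmS : sgpMult S = m) (hm2 : 2 ≤ m) :
    kunzCoords S m ∈ KunzPolyhedron m := by
  have hm0 : 0 < m := by omega
  refine ⟨?_, ?_, ?_, ?_⟩
  · intro i h1 h2
    obtain ⟨-, -, hk, hk1, -⟩ := w_spec hS hmS hm2 h1 h2
    rw [hk]
    exact_mod_cast hk1
  · intro i j h1 hij hj hsum
    obtain ⟨hw1i, hw2i, hki, -, hdi⟩ := w_spec hS hmS hm2 h1 (by omega)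
    obtain ⟨hw1j, hw2j, hkj, -, hdj⟩ := w_spec hS hmS hm2 (by omega) hj
    obtain ⟨hw1s, hw2s, hks, -, hds⟩ := w_spec hS hmS hm2 (by omega) hsum
    set wi := sInf {s ∈ S | s % m = i}
    set wj := sInf {s ∈ S | s % m = j}
    set ws := sInf {s ∈ S | s % m = i + j}
    have hmem : wi + wj ∈ S := hS.2.1 _ hw1i _ hw1j
    have hmod : (wi + wj) % m = i + j := by
      rw [Nat.add_mod, hw2i, hw2j, Nat.mod_eq_of_lt (by omega)]
    have hle : ws ≤ wi + wj := Nat.sInf_le ⟨hmem, hmod⟩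
    have h5 : m * (ws / m) ≤ m * (wi / m + wj / m) := by
      rw [Nat.mul_add]
      omega
    have h6 : ws / m ≤ wi / m + wj / m := Nat.le_of_mul_le_mul_left h5 hm0
    rw [hki, hkj, hks]
    push_cast
    omega
  · intro i j h1 hij hj hgt
    have hjm : 1 ≤ j := by omega
    have him : i ≤ m - 1 := by omega
    have hr1 : 1 ≤ i + j - m := by omega
    have hr2 : i + j - m ≤ m - 1 := by omega
    obtain ⟨hw1i, hw2i, hki, -, hdi⟩ := w_spec hS hmS hm2 h1 him
    obtain ⟨hw1j, hw2j, hkj, -, hdj⟩ := w_spec hS hmS hm2 hjm hj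
    obtain ⟨hw1s, hw2s, hks, -, hds⟩ := w_spec hS hmS hm2 hr1 hr2
    set wi := sInf {s ∈ S | s % m = i}
    set wj := sInf {s ∈ S | s % m = j}
    set ws := sInf {s ∈ S | s % m = i + j - m}
    have hmem : wi + wj ∈ S := hS.2.1 _ hw1i _ hw1j
    have hmod : (wi + wj) % m = i + j - m := by
      rw [Nat.add_mod, hw2i, hw2j, Nat.mod_eq_sub_mod (by omega),
        Nat.mod_eq_of_lt (by omega)]
    have hle : ws ≤ wi + wj := Nat.sInf_le ⟨hmem, hmod⟩
    have h5 : m * (ws / m) ≤ m * (wi / m + wj / m + 1) := by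
      rw [Nat.mul_add, Nat.mul_add, Nat.mul_one]
      omega
    have h6 : ws / m ≤ wi / m + wj / m + 1 := Nat.le_of_mul_le_mul_left h5 hm0
    rw [hki, hkj, hks]
    push_cast
    omega
  · intro i hi
    rw [kunzCoords, if_neg hi]

end KunzAux

/-- Kunz/Rosales et al.: for `m ≥ 2`, the Kunz coordinates give a bijection
between numerical semigroups of multiplicity `m` and the integer points of
the Kunz polyhedron. -/


theorem kunz_bijection (m : ℕ) (hm : 2 ≤ m) :
    Set.BijOn (fun S => kunzCoords S m)
      {S : Set ℕ | IsNumericalSemigroup S ∧ sgpMult S = m}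
      (KunzPolyhedron m) := by
  refine ⟨?_, ?_, ?_⟩
  · intro S hS
    exact KunzAux.maps_to hS.1 hS.2 hm
  · intro S hS T hT h
    simp only at h
    ext n
    rw [KunzAux.mem_iff_kunz hS.1 hS.2 hm n, KunzAux.mem_iff_kunz hT.1 hT.2 hm n, h]
  · intro x hx
    exact ⟨KunzAux.Sof m x, ⟨KunzAux.sof_ns hx hm, KunzAux.sof_mult hx hm⟩,
      KunzAux.sof_kunz hx hm⟩
end

section
/- The number of numerical semigroups with multiplicity 3 and genus g equals ⌈(g+1)/3⌉, for all g ≥ 2. -/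
/-- The semigroup generated by 3, 3a+1, 3b+2. -/
def Sab (a b : ℕ) : Set ℕ :=
  {n | n % 3 = 0 ∨ (n % 3 = 1 ∧ 3*a+1 ≤ n) ∨ (n % 3 = 2 ∧ 3*b+2 ≤ n)}

lemma Sab_compl (a b : ℕ) :
    (Sab a b)ᶜ = (fun k => 3*k+1) '' (Set.Iio a) ∪ (fun k => 3*k+2) '' (Set.Iio b) := by
  ext n
  simp only [Sab, Set.mem_compl_iff, Set.mem_setOf_eq, Set.mem_union, Set.mem_image,
    Set.mem_Iio]
  constructor
  · intro h
    have h3 : n % 3 = 0 ∨ n % 3 = 1 ∨ n % 3 = 2 := by omega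
    rcases h3 with h0 | h1 | h2
    · exact absurd (Or.inl h0) h
    · exact Or.inl ⟨n / 3, by omega⟩
    · exact Or.inr ⟨n / 3, by omega⟩
  · rintro (⟨k, hk, rfl⟩ | ⟨k, hk, rfl⟩) <;> omega

lemma Sab_ns (a b : ℕ) (hba : b ≤ 2*a) (hab : a ≤ 2*b+1) :
    IsNumericalSemigroup (Sab a b) := by
  refine ⟨by simp [Sab], ?_, ?_⟩
  · intro x hx y hy
    simp only [Sab, Set.mem_setOf_eq] at *
    omega
  · rw [Sab_compl]
    exact (((Set.finite_Iio a).image _).union ((Set.finite_Iio b).image _))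

lemma Sab_mult (a b : ℕ) (ha : 1 ≤ a) (hb : 1 ≤ b) : sgpMult (Sab a b) = 3 := by
  have h3 : (3 : ℕ) ∈ Sab a b \ {0} := by simp [Sab]
  refine le_antisymm (Nat.sInf_le h3) (le_csInf ⟨3, h3⟩ ?_)
  rintro n ⟨hn, hn0⟩
  simp only [Sab, Set.mem_setOf_eq] at hn
  simp only [Set.mem_singleton_iff] at hn0
  omega

lemma Sab_genus (a b : ℕ) : sgpGenus (Sab a b) = a + b := by
  rw [sgpGenus, Sab_compl]
  rw [Set.ncard_union_eq]
  · rw [Set.ncard_image_of_injective _ (fun x y h => by omega),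
      Set.ncard_image_of_injective _ (fun x y h => by omega)]
    rw [← Finset.coe_Iio, ← Finset.coe_Iio, Set.ncard_coe_finset, Set.ncard_coe_finset,
      Nat.card_Iio, Nat.card_Iio]
  · rw [Set.disjoint_left]
    rintro x ⟨k, hk, rfl⟩ ⟨j, hj, h⟩
    simp only at h
    omega

lemma Sab_struct (S : Set ℕ) (hS : IsNumericalSemigroup S) (hm : sgpMult S = 3) :
    ∃ a b, 1 ≤ a ∧ 1 ≤ b ∧ b ≤ 2*a ∧ a ≤ 2*b+1 ∧ S = Sab a b := by
  obtain ⟨h0, hadd, hfin⟩ := hS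
  have hm3 : sInf (S \ {0}) = 3 := hm
  obtain ⟨N, hN⟩ := hfin.bddAbove
  have hbig : ∀ n, N < n → n ∈ S := by
    intro n hn
    by_contra hns
    exact absurd (hN hns) (by omega)
  have hge3 : ∀ n ∈ S, n ≠ 0 → 3 ≤ n := by
    intro n hn hn0
    have := Nat.sInf_le (s := S \ {0}) ⟨hn, hn0⟩
    rw [hm3] at this
    exact this
  have h3 : (3 : ℕ) ∈ S := by
    have hne : (S \ {0}).Nonempty := ⟨N + 1, hbig _ (by omega), by simp⟩
    have := Nat.sInf_mem hne
    rw [hm3] at this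
    exact this.1
  have hmul : ∀ k, 3 * k ∈ S := by
    intro k
    induction k with
    | zero => simpa using h0
    | succ k ih =>
        have := hadd _ ih _ h3
        have he : 3 * (k + 1) = 3 * k + 3 := by ring
        rw [he]; exact this
  set T1 : Set ℕ := {n | n ∈ S ∧ n % 3 = 1} with hT1
  set T2 : Set ℕ := {n | n ∈ S ∧ n % 3 = 2} with hT2
  have hT1ne : T1.Nonempty := ⟨3 * N + 4, hbig _ (by omega), by omega⟩
  have hT2ne : T2.Nonempty := ⟨3 * N + 5, hbig _ (by omega), by omega⟩
  obtain ⟨hxS, hx1⟩ := Nat.sInf_mem hT1ne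
  obtain ⟨hyS, hy2⟩ := Nat.sInf_mem hT2ne
  set x := sInf T1
  set y := sInf T2
  have hxge : 4 ≤ x := by
    have := hge3 x hxS (by omega)
    omega
  have hyge : 5 ≤ y := by
    have := hge3 y hyS (by omega)
    omega
  refine ⟨(x - 1) / 3, (y - 2) / 3, by omega, by omega, ?_, ?_, ?_⟩
  · have h2x : x + x ∈ S := hadd _ hxS _ hxS
    have : y ≤ x + x := Nat.sInf_le ⟨h2x, by omega⟩
    omega
  · have h2y : y + y ∈ S := hadd _ hyS _ hyS
    have : x ≤ y + y := Nat.sInf_le ⟨h2y, by omega⟩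
    omega
  · ext n
    simp only [Sab, Set.mem_setOf_eq]
    constructor
    · intro hn
      have h3' : n % 3 = 0 ∨ n % 3 = 1 ∨ n % 3 = 2 := by omega
      rcases h3' with h | h | h
      · exact Or.inl h
      · refine Or.inr (Or.inl ⟨h, ?_⟩)
        have : x ≤ n := Nat.sInf_le ⟨hn, h⟩
        omega
      · refine Or.inr (Or.inr ⟨h, ?_⟩)
        have : y ≤ n := Nat.sInf_le ⟨hn, h⟩
        omega
    · rintro (h | ⟨h, hle⟩ | ⟨h, hle⟩)
      · have he : n = 3 * (n / 3) := by omega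
        rw [he]; exact hmul _
      · have hxn : n = x + 3 * ((n - x) / 3) := by omega
        rw [hxn]; exact hadd _ hxS _ (hmul _)
      · have hyn : n = y + 3 * ((n - y) / 3) := by omega
        rw [hyn]; exact hadd _ hyS _ (hmul _)

lemma Sab_inj (a b a' b' : ℕ) (h : Sab a b = Sab a' b') : a = a' := by
  have h1 : (3*a+1) ∈ Sab a b := by
    simp only [Sab, Set.mem_setOf_eq]; omega
  have h2 : (3*a'+1) ∈ Sab a' b' := by
    simp only [Sab, Set.mem_setOf_eq]; omega
  rw [h] at h1; rw [← h] at h2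
  simp only [Sab, Set.mem_setOf_eq] at h1 h2
  omega

lemma ceil3 (n : ℕ) : ⌈((n : ℚ)) / 3⌉ = ((n + 2) / 3 : ℕ) := by
  set k := (n + 2) / 3 with hk
  have hk1 : n ≤ 3 * k := by omega
  have hk2 : 3 * k ≤ n + 2 := by omega
  have c1 : (n : ℚ) ≤ 3 * (k : ℚ) := by exact_mod_cast hk1
  have c2 : 3 * (k : ℚ) ≤ (n : ℚ) + 2 := by exact_mod_cast hk2
  rw [Int.ceil_eq_iff]
  constructor
  · rw [lt_div_iff₀ (by norm_num : (0:ℚ) < 3)]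
    push_cast
    linarith
  · rw [div_le_iff₀ (by norm_num : (0:ℚ) < 3)]
    push_cast
    linarith

/-- The number of numerical semigroups of multiplicity 3 and genus `g ≥ 2`
is `⌈(g+1)/3⌉`. -/
theorem count_mult_three_genus (g : ℕ) (hg : 2 ≤ g) :
    (Set.ncard {S : Set ℕ | IsNumericalSemigroup S ∧ sgpMult S = 3 ∧
        sgpGenus S = g} : ℤ) = ⌈((g : ℚ) + 1) / 3⌉ := by
  have hset : {S : Set ℕ | IsNumericalSemigroup S ∧ sgpMult S = 3 ∧ sgpGenus S = g} =
      (fun a => Sab a (g - a)) '' {a : ℕ | g ≤ 3*a ∧ 3*a ≤ 2*g+1} := by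
    ext S
    simp only [Set.mem_setOf_eq, Set.mem_image]
    constructor
    · rintro ⟨hns, hm, hgen⟩
      obtain ⟨a, b, ha, hb, hba, hab, rfl⟩ := Sab_struct S hns hm
      rw [Sab_genus] at hgen
      refine ⟨a, ⟨by omega, by omega⟩, ?_⟩
      have hb' : g - a = b := by omega
      rw [hb']
    · rintro ⟨a, ⟨h1, h2⟩, rfl⟩
      have ha : 1 ≤ a := by omega
      have hb : 1 ≤ g - a := by omega
      exact ⟨Sab_ns _ _ (by omega) (by omega), Sab_mult _ _ ha hb,
        by rw [Sab_genus]; omega⟩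
  rw [hset, Set.ncard_image_of_injOn (fun a _ a' _ h => Sab_inj _ _ _ _ h)]
  have hidx : {a : ℕ | g ≤ 3*a ∧ 3*a ≤ 2*g+1} =
      ↑(Finset.Icc ((g+2)/3) ((2*g+1)/3)) := by
    ext a
    simp only [Set.mem_setOf_eq, Finset.coe_Icc, Set.mem_Icc]
    omega
  rw [hidx, Set.ncard_coe_finset, Nat.card_Icc]
  have hc : ((g : ℚ) + 1) = (((g + 1 : ℕ) : ℚ)) := by push_cast; ring
  rw [hc, ceil3]
  have : (2*g+1)/3 + 1 - (g+2)/3 = (g + 1 + 2) / 3 := by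
    obtain ⟨q, r, hr, rfl⟩ : ∃ q r, r < 3 ∧ g = 3*q + r := ⟨g/3, g%3, by omega, by omega⟩
    interval_cases r <;> omega
  rw [this]
end

section
/- The number of maximal embedding dimension numerical semigroups with multiplicity 3 and genus g ≥ 2 equals ⌈(g−1)/3⌉. -/
namespace MedAux

def W (a b : ℕ) : Set ℕ :=
  {n | n % 3 = 0 ∨ (n % 3 = 1 ∧ a ≤ n) ∨ (n % 3 = 2 ∧ b ≤ n)}

lemma mem_W {a b n : ℕ} :
    n ∈ W a b ↔ (n % 3 = 0 ∨ (n % 3 = 1 ∧ a ≤ n) ∨ (n % 3 = 2 ∧ b ≤ n)) := Iff.rfl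

lemma W_compl_finite (a b : ℕ) : (W a b)ᶜ.Finite := by
  apply Set.Finite.subset (Set.finite_Iio (a + b))
  intro n hn
  simp only [Set.mem_compl_iff, W, Set.mem_setOf_eq] at hn
  simp only [Set.mem_Iio]
  omega

lemma W_isNS {a b : ℕ} (ha : a % 3 = 1) (hb : b % 3 = 2)
    (h1 : a ≤ 2 * b) (h2 : b ≤ 2 * a) : IsNumericalSemigroup (W a b) := by
  refine ⟨Or.inl rfl, ?_, W_compl_finite a b⟩
  intro p hp q hq
  simp only [W, Set.mem_setOf_eq] at hp hq ⊢
  omega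

lemma W_compl_ncard {a b : ℕ} (ha : a % 3 = 1) (hb : b % 3 = 2) :
    Set.ncard (W a b)ᶜ = a / 3 + b / 3 := by
  have h : (W a b)ᶜ = ↑(((Finset.range (a/3)).image (fun k => 3*k+1)) ∪
      ((Finset.range (b/3)).image (fun k => 3*k+2))) := by
    ext n
    simp only [W, Set.mem_compl_iff, Set.mem_setOf_eq, Finset.coe_union, Set.mem_union,
      Finset.coe_image, Set.mem_image, Finset.mem_coe, Finset.mem_range]
    constructor
    · intro hn
      by_cases h3 : n % 3 = 1
      · exact Or.inl ⟨n/3, by omega, by omega⟩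
      · exact Or.inr ⟨n/3, by omega, by omega⟩
    · rintro (⟨k, hk, rfl⟩ | ⟨k, hk, rfl⟩) <;> omega
  rw [h, Set.ncard_coe_finset, Finset.card_union_of_disjoint,
    Finset.card_image_of_injective _ (fun x y h => by omega),
    Finset.card_image_of_injective _ (fun x y h => by omega),
    Finset.card_range, Finset.card_range]
  · simp only [Finset.disjoint_left, Finset.mem_image, Finset.mem_range]
    rintro n ⟨k, hk, rfl⟩ ⟨j, hj, hje⟩
    omega


lemma mem_diff0 {S : Set ℕ} {n : ℕ} (h : n ∈ S) (h0 : n ≠ 0) : n ∈ S \ {0} := ⟨h, h0⟩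

lemma W_minGens_subset {a b : ℕ} (ha : a % 3 = 1) (hb : b % 3 = 2) :
    MinGens (W a b) ⊆ {3, a, b} := by
  intro s hs
  obtain ⟨hsW, hs0, hmin⟩ := hs
  simp only [W, Set.mem_setOf_eq] at hsW
  simp only [Set.mem_insert_iff, Set.mem_singleton_iff]
  by_contra hne
  push_neg at hne
  exact hmin 3 (mem_diff0 (Or.inl rfl) (by omega)) (s - 3)
    (mem_diff0 (by simp only [W, Set.mem_setOf_eq]; omega) (by omega)) (by omega)

lemma W_minGens {a b : ℕ} (ha : a % 3 = 1) (hb : b % 3 = 2)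
    (ha4 : 4 ≤ a) (hb5 : 5 ≤ b) (hab : a < 2 * b) (hba : b < 2 * a) :
    MinGens (W a b) = {3, a, b} := by
  apply Set.Subset.antisymm (W_minGens_subset ha hb)
  intro s hs
  simp only [Set.mem_insert_iff, Set.mem_singleton_iff] at hs
  have hsW : s ∈ W a b := by
    simp only [W, Set.mem_setOf_eq]; omega
  refine ⟨hsW, by omega, ?_⟩
  rintro p ⟨hp, hp0⟩ q ⟨hq, hq0⟩
  simp only [W, Set.mem_setOf_eq] at hp hq
  simp only [Set.mem_singleton_iff] at hp0 hq0
  omega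

lemma W_mult {a b : ℕ} (ha : a % 3 = 1) (hb : b % 3 = 2) (ha4 : 4 ≤ a) (hb5 : 5 ≤ b) :
    sgpMult (W a b) = 3 := by
  unfold sgpMult
  have h3 : (3:ℕ) ∈ W a b \ {0} := mem_diff0 (Or.inl rfl) (by omega)
  apply le_antisymm (Nat.sInf_le h3)
  set m := sInf (W a b \ {0}) with hmdef
  have hmem : m ∈ W a b \ {0} := Nat.sInf_mem (Set.nonempty_of_mem h3)
  obtain ⟨hm1, hm2⟩ := hmem
  rw [mem_W] at hm1
  simp only [Set.mem_singleton_iff] at hm2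
  omega

lemma W_edim {a b : ℕ} (ha : a % 3 = 1) (hb : b % 3 = 2)
    (ha4 : 4 ≤ a) (hb5 : 5 ≤ b) (hab : a < 2 * b) (hba : b < 2 * a) :
    sgpEdim (W a b) = 3 := by
  unfold sgpEdim
  rw [W_minGens ha hb ha4 hb5 hab hba]
  rw [Set.ncard_eq_three]
  exact ⟨3, a, b, by omega, by omega, by omega, rfl⟩

lemma med_strict {a b : ℕ} (ha : a % 3 = 1) (hb : b % 3 = 2) (ha4 : 4 ≤ a) (hb5 : 5 ≤ b)
    (hmed : IsMED (W a b)) : a < 2 * b ∧ b < 2 * a := by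
  have hmult := W_mult ha hb ha4 hb5
  unfold IsMED at hmed
  rw [hmult] at hmed
  constructor
  · by_contra h
    push_neg at h
    have hsub : MinGens (W a b) ⊆ {3, b} := by
      intro s hs
      have h2 := W_minGens_subset ha hb hs
      obtain ⟨hsW, hs0, hmin⟩ := hs
      simp only [Set.mem_insert_iff, Set.mem_singleton_iff] at h2 ⊢
      rcases h2 with rfl | rfl | rfl
      · exact Or.inl rfl
      · exfalso
        exact hmin b (mem_diff0 (Or.inr (Or.inr ⟨hb, le_refl b⟩)) (by omega)) (s - b)
          (mem_diff0 (by simp only [W, Set.mem_setOf_eq]; omega) (by omega)) (by omega)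
      · exact Or.inr rfl
    have hle : sgpEdim (W a b) ≤ 2 := by
      calc Set.ncard (MinGens (W a b)) ≤ Set.ncard ({3, b} : Set ℕ) :=
            Set.ncard_le_ncard hsub (Set.toFinite _)
        _ ≤ 2 := by
            apply le_trans (Set.ncard_insert_le _ _)
            simp
    omega
  · by_contra h
    push_neg at h
    have hsub : MinGens (W a b) ⊆ {3, a} := by
      intro s hs
      have h2 := W_minGens_subset ha hb hs
      obtain ⟨hsW, hs0, hmin⟩ := hs
      simp only [Set.mem_insert_iff, Set.mem_singleton_iff] at h2 ⊢
      rcases h2 with rfl | rfl | rfl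
      · exact Or.inl rfl
      · exact Or.inr rfl
      · exfalso
        exact hmin a (mem_diff0 (Or.inr (Or.inl ⟨ha, le_refl a⟩)) (by omega)) (s - a)
          (mem_diff0 (by simp only [W, Set.mem_setOf_eq]; omega) (by omega)) (by omega)
    have hle : sgpEdim (W a b) ≤ 2 := by
      calc Set.ncard (MinGens (W a b)) ≤ Set.ncard ({3, a} : Set ℕ) :=
            Set.ncard_le_ncard hsub (Set.toFinite _)
        _ ≤ 2 := by
            apply le_trans (Set.ncard_insert_le _ _)
            simp
    omega


lemma struct {S : Set ℕ} (hS : IsNumericalSemigroup S) (hm : sgpMult S = 3) :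
    ∃ a b, a % 3 = 1 ∧ b % 3 = 2 ∧ 4 ≤ a ∧ 5 ≤ b ∧ a ≤ 2 * b ∧ b ≤ 2 * a ∧ S = W a b := by
  obtain ⟨h0, hadd, hfin⟩ := hS
  unfold sgpMult at hm
  have hne : (S \ {0}).Nonempty := by
    have hinf : S.Infinite := by
      have := hfin.infinite_compl
      rwa [compl_compl] at this
    exact (hinf.diff (Set.finite_singleton 0)).nonempty
  have h3' : (3 : ℕ) ∈ S \ {0} := hm ▸ Nat.sInf_mem hne
  have h3S : (3 : ℕ) ∈ S := h3'.1
  have hlow : ∀ n ∈ S, n ≠ 0 → 3 ≤ n := by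
    intro n hn hn0
    have hmem : n ∈ S \ {0} := ⟨hn, hn0⟩
    have := Nat.sInf_le hmem
    omega
  have mult3 : ∀ k, 3 * k ∈ S := by
    intro k
    induction k with
    | zero => simpa using h0
    | succ n ih =>
        have h' : 3 * (n + 1) = 3 + 3 * n := by ring
        rw [h']
        exact hadd 3 h3S _ ih
  obtain ⟨c, hc⟩ := hfin.bddAbove
  have hbig : ∀ n, c < n → n ∈ S := by
    intro n hn
    by_contra h
    exact absurd (hc h) (by omega)
  -- least element ≡ 1 mod 3
  have hAne : {n | n ∈ S ∧ n % 3 = 1}.Nonempty :=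
    ⟨3 * c + 4, hbig _ (by omega), by omega⟩
  have hBne : {n | n ∈ S ∧ n % 3 = 2}.Nonempty :=
    ⟨3 * c + 5, hbig _ (by omega), by omega⟩
  set a := sInf {n | n ∈ S ∧ n % 3 = 1} with hadef
  set b := sInf {n | n ∈ S ∧ n % 3 = 2} with hbdef
  obtain ⟨haS, ha1⟩ : a ∈ S ∧ a % 3 = 1 := Nat.sInf_mem hAne
  obtain ⟨hbS, hb2⟩ : b ∈ S ∧ b % 3 = 2 := Nat.sInf_mem hBne
  have ha4 : 4 ≤ a := by
    have := hlow a haS (by omega)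
    omega
  have hb5 : 5 ≤ b := by
    have := hlow b hbS (by omega)
    omega
  have hale : ∀ n ∈ S, n % 3 = 1 → a ≤ n := fun n hn h1 => Nat.sInf_le ⟨hn, h1⟩
  have hble : ∀ n ∈ S, n % 3 = 2 → b ≤ n := fun n hn h2 => Nat.sInf_le ⟨hn, h2⟩
  have hab : a ≤ 2 * b := by
    have h2b : b + b ∈ S := hadd b hbS b hbS
    have := hale (b + b) h2b (by omega)
    omega
  have hba : b ≤ 2 * a := by
    have h2a : a + a ∈ S := hadd a haS a haS
    have := hble (a + a) h2a (by omega)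
    omega
  refine ⟨a, b, ha1, hb2, ha4, hb5, hab, hba, ?_⟩
  ext n
  rw [mem_W]
  constructor
  · intro hn
    by_cases h1 : n % 3 = 1
    · exact Or.inr (Or.inl ⟨h1, hale n hn h1⟩)
    · by_cases h2 : n % 3 = 2
      · exact Or.inr (Or.inr ⟨h2, hble n hn h2⟩)
      · exact Or.inl (by omega)
  · rintro (h | ⟨h1, h2⟩ | ⟨h1, h2⟩)
    · have he : n = 3 * (n / 3) := by omega
      rw [he]; exact mult3 _
    · have he : n = a + 3 * ((n - a) / 3) := by omega
      rw [he]; exact hadd a haS _ (mult3 _)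
    · have he : n = b + 3 * ((n - b) / 3) := by omega
      rw [he]; exact hadd b hbS _ (mult3 _)


end MedAux

open MedAux in
/-- The number of maximal embedding dimension numerical semigroups of
multiplicity 3 and genus `g ≥ 2` is `⌈(g−1)/3⌉`. -/
theorem count_med_mult_three_genus (g : ℕ) (hg : 2 ≤ g) :
    (Set.ncard {S : Set ℕ | IsNumericalSemigroup S ∧ sgpMult S = 3 ∧
        IsMED S ∧ sgpGenus S = g} : ℤ) = ⌈((g : ℚ) - 1) / 3⌉ := by
  have hset : {S : Set ℕ | IsNumericalSemigroup S ∧ sgpMult S = 3 ∧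
        IsMED S ∧ sgpGenus S = g} =
      (fun x => W (3*x+1) (3*(g-x)+2)) '' {x : ℕ | g + 1 ≤ 3*x ∧ 3*x ≤ 2*g} := by
    ext S
    simp only [Set.mem_setOf_eq, Set.mem_image]
    constructor
    · rintro ⟨hS, hm, hmed, hgen⟩
      obtain ⟨a, b, ha, hb, ha4, hb5, hab2, hba2, rfl⟩ := struct hS hm
      obtain ⟨hab, hba⟩ := med_strict ha hb ha4 hb5 hmed
      have hgen' : a / 3 + b / 3 = g := by
        unfold sgpGenus at hgen
        rw [W_compl_ncard ha hb] at hgen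
        exact hgen
      refine ⟨a / 3, ⟨by omega, by omega⟩, ?_⟩
      have e1 : 3 * (a / 3) + 1 = a := by omega
      have e2 : 3 * (g - a / 3) + 2 = b := by omega
      simp only [e1, e2]
    · rintro ⟨x, ⟨hx1, hx2⟩, rfl⟩
      have ha : (3*x+1) % 3 = 1 := by omega
      have hb : (3*(g-x)+2) % 3 = 2 := by omega
      have ha4 : 4 ≤ 3*x+1 := by omega
      have hb5 : 5 ≤ 3*(g-x)+2 := by omega
      have hab : 3*x+1 < 2 * (3*(g-x)+2) := by omega
      have hba : 3*(g-x)+2 < 2 * (3*x+1) := by omega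
      refine ⟨W_isNS ha hb (by omega) (by omega), W_mult ha hb ha4 hb5, ?_, ?_⟩
      · unfold IsMED
        rw [W_edim ha hb ha4 hb5 hab hba, W_mult ha hb ha4 hb5]
      · unfold sgpGenus
        rw [W_compl_ncard ha hb]
        omega
  have hinj : Set.InjOn (fun x => W (3*x+1) (3*(g-x)+2)) {x : ℕ | g + 1 ≤ 3*x ∧ 3*x ≤ 2*g} := by
    intro x hx y hy h
    simp only at h
    rw [Set.ext_iff] at h
    have m1 : 3*x+1 ∈ W (3*x+1) (3*(g-x)+2) :=
      mem_W.mpr (Or.inr (Or.inl ⟨by omega, le_refl _⟩))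
    have m2 : 3*y+1 ∈ W (3*y+1) (3*(g-y)+2) :=
      mem_W.mpr (Or.inr (Or.inl ⟨by omega, le_refl _⟩))
    have h1 := mem_W.mp ((h (3*x+1)).mp m1)
    have h2 := mem_W.mp ((h (3*y+1)).mpr m2)
    omega
  rw [hset, Set.ncard_image_of_injOn hinj]
  have hIcc : {x : ℕ | g + 1 ≤ 3*x ∧ 3*x ≤ 2*g} = ↑(Finset.Icc ((g+3)/3) (2*g/3)) := by
    ext x
    simp only [Set.mem_setOf_eq, Finset.coe_Icc, Set.mem_Icc]
    omega
  rw [hIcc, Set.ncard_coe_finset, Nat.card_Icc]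
  set k := 2*g/3 + 1 - (g+3)/3 with hk
  have hkb : 3*k ≤ g+1 ∧ g ≤ 3*k+1 := by
    rw [hk]
    obtain ⟨q, r, hqr, hr⟩ : ∃ q r, g = 3*q + r ∧ r < 3 := ⟨g/3, g%3, by omega, by omega⟩
    subst hqr
    interval_cases r
    · have e1 : 2*(3*q+0)/3 = 2*q := by omega
      have e2 : ((3*q+0)+3)/3 = q+1 := by omega
      omega
    · have e1 : 2*(3*q+1)/3 = 2*q := by omega
      have e2 : ((3*q+1)+3)/3 = q+1 := by omega
      omega
    · have e1 : 2*(3*q+2)/3 = 2*q+1 := by omega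
      have e2 : ((3*q+2)+3)/3 = q+1 := by omega
      omega
  have hk1 : 3*k ≤ g+1 := hkb.1
  have hk2 : g ≤ 3*k+1 := hkb.2
  symm
  rw [Int.ceil_eq_iff]
  have c1 : (3*k : ℚ) ≤ (g : ℚ) + 1 := by exact_mod_cast hk1
  have c2 : (g : ℚ) ≤ 3*(k : ℚ) + 1 := by exact_mod_cast hk2
  constructor
  · push_cast
    rw [show ((k:ℚ) - 1) = ((k:ℚ) - 1) from rfl]
    rw [lt_div_iff₀ (by norm_num : (0:ℚ) < 3)]
    linarith
  · push_cast
    rw [div_le_iff₀ (by norm_num : (0:ℚ) < 3)]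
    linarith
end

section
/- For g ≥ 2, the set of numerical semigroups of multiplicity 3 and genus g coincides with the set of maximal embedding dimension numerical semigroups of multiplicity 3 and genus g if and only if g ≡ 2 (mod 3). -/
set_option linter.unusedSectionVars false

section Aux

variable {S : Set ℕ} {a b : ℕ}
variable (ha : a % 3 = 1) (hb : b % 3 = 2) (ha4 : 4 ≤ a) (hb5 : 5 ≤ b)
  (hab : a ≤ 2*b) (hba : b ≤ 2*a)
  (hchar : ∀ n, n ∈ S ↔ n % 3 = 0 ∨ (n % 3 = 1 ∧ a ≤ n) ∨ (n % 3 = 2 ∧ b ≤ n))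

include ha hb ha4 hb5 hab hba hchar

lemma aux_ns : IsNumericalSemigroup S := by
  refine ⟨(hchar 0).2 (by omega), fun u hu v hv => ?_, ?_⟩
  · rw [hchar] at hu hv ⊢; omega
  · apply Set.Finite.subset (Set.finite_Iio (a+b))
    intro n hn
    simp only [Set.mem_compl_iff, hchar] at hn
    simp only [Set.mem_Iio]
    omega

lemma aux_mult : sgpMult S = 3 := by
  have h3 : 3 ∈ S \ {0} := ⟨(hchar 3).2 (by omega), by simp⟩
  refine le_antisymm (Nat.sInf_le h3) (le_csInf ⟨3, h3⟩ ?_)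
  rintro n ⟨hn, hn0⟩
  rw [hchar] at hn
  simp only [Set.mem_singleton_iff] at hn0
  omega

lemma aux_genus : sgpGenus S = a/3 + b/3 := by
  have : Sᶜ = ↑(((Finset.range (a/3)).image (fun k => 3*k+1)) ∪
      ((Finset.range (b/3)).image (fun k => 3*k+2))) := by
    ext n
    simp only [Set.mem_compl_iff, hchar, Finset.coe_union, Set.mem_union,
      Finset.coe_image, Set.mem_image, Finset.mem_coe, Finset.mem_range]
    constructor
    · intro h
      push_neg at h
      rcases (by omega : (n % 3 = 1 ∧ n < a) ∨ (n % 3 = 2 ∧ n < b)) with h1 | h1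
      · exact Or.inl ⟨n/3, by omega, by omega⟩
      · exact Or.inr ⟨n/3, by omega, by omega⟩
    · rintro (⟨k, hk, he⟩ | ⟨k, hk, he⟩) <;> omega
  rw [sgpGenus, this, Set.ncard_coe_finset, Finset.card_union_of_disjoint, Finset.card_image_of_injective, Finset.card_image_of_injective, Finset.card_range, Finset.card_range]
  · intro x y h
    have h' : 3*x+2 = 3*y+2 := h
    omega
  · intro x y h
    have h' : 3*x+1 = 3*y+1 := h
    omega
  · rw [Finset.disjoint_left]
    intro x hx hy
    simp only [Finset.mem_image, Finset.mem_range] at hx hy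
    obtain ⟨k, hk, hk2⟩ := hx
    obtain ⟨j, hj, hj2⟩ := hy
    omega

lemma aux_elts_ge (u : ℕ) (huS : u ∈ S) (hu0 : u ≠ 0) : 3 ≤ u := by
  rw [hchar] at huS; omega

lemma aux_minGens_subset : MinGens S ⊆ {3, a, b} := by
  rintro s ⟨hsS, hs0, hmin⟩
  simp only [Set.mem_insert_iff, Set.mem_singleton_iff]
  by_contra hc
  push_neg at hc
  obtain ⟨h3, hA, hB⟩ := hc
  rw [hchar] at hsS
  rcases hsS with h | ⟨h, hle⟩ | ⟨h, hle⟩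
  · exact hmin 3 ⟨(hchar 3).2 (by omega), by simp⟩ (s-3)
      ⟨(hchar _).2 (by omega), by simp; omega⟩ (by omega)
  · exact hmin a ⟨(hchar a).2 (by omega), by simp; omega⟩ (s-a)
      ⟨(hchar _).2 (by omega), by simp; omega⟩ (by omega)
  · exact hmin b ⟨(hchar b).2 (by omega), by simp; omega⟩ (s-b)
      ⟨(hchar _).2 (by omega), by simp; omega⟩ (by omega)

lemma aux_three_mem : 3 ∈ MinGens S := by
  refine ⟨(hchar 3).2 (by omega), by omega, ?_⟩
  rintro u ⟨huS, hu0⟩ v ⟨hvS, hv0⟩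
  rw [hchar] at huS hvS
  simp only [Set.mem_singleton_iff] at hu0 hv0
  omega

lemma aux_a_mem (h : a < 2*b) : a ∈ MinGens S := by
  refine ⟨(hchar a).2 (by omega), by omega, ?_⟩
  rintro u ⟨huS, hu0⟩ v ⟨hvS, hv0⟩
  rw [hchar] at huS hvS
  simp only [Set.mem_singleton_iff] at hu0 hv0
  omega

lemma aux_b_mem (h : b < 2*a) : b ∈ MinGens S := by
  refine ⟨(hchar b).2 (by omega), by omega, ?_⟩
  rintro u ⟨huS, hu0⟩ v ⟨hvS, hv0⟩
  rw [hchar] at huS hvS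
  simp only [Set.mem_singleton_iff] at hu0 hv0
  omega

lemma aux_edim3 (h1 : a < 2*b) (h2 : b < 2*a) : sgpEdim S = 3 := by
  have hMG : MinGens S = {3, a, b} := by
    refine Set.Subset.antisymm (aux_minGens_subset ha hb ha4 hb5 hab hba hchar) ?_
    rintro x (rfl | rfl | rfl)
    · exact aux_three_mem ha hb ha4 hb5 hab hba hchar
    · exact aux_a_mem ha hb ha4 hb5 hab hba hchar h1
    · exact aux_b_mem ha hb ha4 hb5 hab hba hchar h2
  rw [sgpEdim, hMG]
  rw [Set.ncard_eq_three]
  exact ⟨3, a, b, by omega, by omega, by omega, rfl⟩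

lemma aux_not_MED_ba (h : b = 2*a) : ¬ IsMED S := by
  have hsub : MinGens S ⊆ {3, a} := by
    intro s hs
    have h1 := aux_minGens_subset ha hb ha4 hb5 hab hba hchar hs
    rcases h1 with rfl | rfl | rfl
    · exact Or.inl rfl
    · exact Or.inr rfl
    · exfalso
      exact hs.2.2 a ⟨(hchar a).2 (by omega), by simp; omega⟩ a
        ⟨(hchar a).2 (by omega), by simp; omega⟩ (by omega)
  intro hmed
  rw [IsMED, aux_mult ha hb ha4 hb5 hab hba hchar] at hmed
  have : sgpEdim S ≤ 2 := by
    calc sgpEdim S ≤ ({3, a} : Set ℕ).ncard :=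
          Set.ncard_le_ncard hsub (Set.toFinite _)
      _ ≤ 2 := by
          apply le_trans (Set.ncard_insert_le _ _); simp
  omega

lemma aux_not_MED_ab (h : a = 2*b) : ¬ IsMED S := by
  have hsub : MinGens S ⊆ {3, b} := by
    intro s hs
    have h1 := aux_minGens_subset ha hb ha4 hb5 hab hba hchar hs
    rcases h1 with rfl | rfl | rfl
    · exact Or.inl rfl
    · exfalso
      exact hs.2.2 b ⟨(hchar b).2 (by omega), by simp; omega⟩ b
        ⟨(hchar b).2 (by omega), by simp; omega⟩ (by omega)
    · exact Or.inr rfl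
  intro hmed
  rw [IsMED, aux_mult ha hb ha4 hb5 hab hba hchar] at hmed
  have : sgpEdim S ≤ 2 := by
    calc sgpEdim S ≤ ({3, b} : Set ℕ).ncard :=
          Set.ncard_le_ncard hsub (Set.toFinite _)
      _ ≤ 2 := by
          apply le_trans (Set.ncard_insert_le _ _); simp
  omega

end Aux

lemma aux_structure (S : Set ℕ) (hS : IsNumericalSemigroup S) (hm : sgpMult S = 3) :
    ∃ a b, a % 3 = 1 ∧ b % 3 = 2 ∧ 4 ≤ a ∧ 5 ≤ b ∧ a ≤ 2*b ∧ b ≤ 2*a ∧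
      ∀ n, n ∈ S ↔ n % 3 = 0 ∨ (n % 3 = 1 ∧ a ≤ n) ∨ (n % 3 = 2 ∧ b ≤ n) := by
  obtain ⟨h0, hadd, hfin⟩ := hS
  rw [sgpMult] at hm
  have hne : (S \ {0}).Nonempty := by
    obtain ⟨n, hn⟩ := (hfin.union (Set.finite_singleton 0)).infinite_compl.nonempty
    simp only [Set.mem_compl_iff, Set.mem_union, Set.mem_singleton_iff, not_or,
      not_not] at hn
    exact ⟨n, hn.1, by simpa using hn.2⟩
  have h3 : 3 ∈ S := by
    have := Nat.sInf_mem hne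
    rw [hm] at this
    exact this.1
  have h1S : 1 ∉ S := by
    intro h
    have := Nat.sInf_le (show 1 ∈ S \ {0} from ⟨h, by simp⟩)
    omega
  have h2S : 2 ∉ S := by
    intro h
    have := Nat.sInf_le (show 2 ∈ S \ {0} from ⟨h, by simp⟩)
    omega
  have hclass : ∀ r : ℕ, r = 1 ∨ r = 2 → ∃ n, n ∈ S ∧ n % 3 = r := by
    intro r hr
    have hinf : {n : ℕ | n % 3 = r}.Infinite := by
      apply Set.infinite_of_injective_forall_mem (f := fun k => 3*k + r)
      · intro x y h
        simp only at h
        omega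
      · intro k; simp only [Set.mem_setOf_eq]; omega
    obtain ⟨n, hn1, hn2⟩ := (hinf.diff hfin).nonempty
    refine ⟨n, ?_, hn1⟩
    simpa using hn2
  have hadd3 : ∀ m ∈ S, ∀ k, m + 3*k ∈ S := by
    intro m hmS k
    induction k with
    | zero => simpa using hmS
    | succ k ih =>
      have h2 := hadd _ ih _ h3
      have he : m + 3*(k+1) = m + 3*k + 3 := by ring
      rwa [he]
  obtain ⟨a, ⟨haS, ha⟩, hamin⟩ :
      ∃ a, (a ∈ S ∧ a % 3 = 1) ∧ ∀ n, n ∈ S → n % 3 = 1 → a ≤ n := by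
    obtain ⟨n, hn⟩ := hclass 1 (Or.inl rfl)
    refine ⟨sInf {n | n ∈ S ∧ n % 3 = 1}, ?_, fun m h1 h2 => Nat.sInf_le ⟨h1, h2⟩⟩
    have := Nat.sInf_mem (⟨n, hn⟩ : {n | n ∈ S ∧ n % 3 = 1}.Nonempty)
    exact this
  obtain ⟨b, ⟨hbS, hb⟩, hbmin⟩ :
      ∃ b, (b ∈ S ∧ b % 3 = 2) ∧ ∀ n, n ∈ S → n % 3 = 2 → b ≤ n := by
    obtain ⟨n, hn⟩ := hclass 2 (Or.inr rfl)
    refine ⟨sInf {n | n ∈ S ∧ n % 3 = 2}, ?_, fun m h1 h2 => Nat.sInf_le ⟨h1, h2⟩⟩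
    have := Nat.sInf_mem (⟨n, hn⟩ : {n | n ∈ S ∧ n % 3 = 2}.Nonempty)
    exact this
  have ha1 : a ≠ 1 := fun h => h1S (h ▸ haS)
  have hb2 : b ≠ 2 := fun h => h2S (h ▸ hbS)
  have ha4 : 4 ≤ a := by omega
  have hb5 : 5 ≤ b := by omega
  have hchar : ∀ n, n ∈ S ↔ n % 3 = 0 ∨ (n % 3 = 1 ∧ a ≤ n) ∨ (n % 3 = 2 ∧ b ≤ n) := by
    intro n
    constructor
    · intro hn
      rcases (by omega : n % 3 = 0 ∨ n % 3 = 1 ∨ n % 3 = 2) with h | h | h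
      · exact Or.inl h
      · exact Or.inr (Or.inl ⟨h, hamin n hn h⟩)
      · exact Or.inr (Or.inr ⟨h, hbmin n hn h⟩)
    · rintro (h | ⟨h1, h2⟩ | ⟨h1, h2⟩)
      · have := hadd3 0 h0 (n/3)
        have he : n = 0 + 3*(n/3) := by omega
        rwa [← he] at this
      · have := hadd3 a haS ((n-a)/3)
        have he : n = a + 3*((n-a)/3) := by omega
        rwa [← he] at this
      · have := hadd3 b hbS ((n-b)/3)
        have he : n = b + 3*((n-b)/3) := by omega
        rwa [← he] at this
  have hab : a ≤ 2*b := by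
    have h2b : 2*b ∈ S := by have := hadd b hbS b hbS; rwa [show 2*b = b + b from by ring]
    exact hamin _ h2b (by omega)
  have hba : b ≤ 2*a := by
    have h2a : 2*a ∈ S := by have := hadd a haS a haS; rwa [show 2*a = a + a from by ring]
    exact hbmin _ h2a (by omega)
  exact ⟨a, b, ha, hb, ha4, hb5, hab, hba, hchar⟩

/-- For `g ≥ 2`, every numerical semigroup of multiplicity 3 and genus `g` has
maximal embedding dimension if and only if `g ≡ 2 (mod 3)`. -/
theorem med_eq_all_iff_mod_three (g : ℕ) (hg : 2 ≤ g) :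
    {S : Set ℕ | IsNumericalSemigroup S ∧ sgpMult S = 3 ∧ sgpGenus S = g} =
      {S : Set ℕ | IsNumericalSemigroup S ∧ sgpMult S = 3 ∧ IsMED S ∧
        sgpGenus S = g} ↔ g % 3 = 2 := by
  constructor
  · intro h
    by_contra hne
    obtain ⟨a, b, ha, hb, ha4, hb5, hab, hba, hgen, hnotmed⟩ :
        ∃ a b : ℕ, a % 3 = 1 ∧ b % 3 = 2 ∧ 4 ≤ a ∧ 5 ≤ b ∧ a ≤ 2*b ∧ b ≤ 2*a ∧
          a/3 + b/3 = g ∧ (a = 2*b ∨ b = 2*a) := by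
      rcases (by omega : g % 3 = 0 ∨ g % 3 = 1) with h0 | h1
      · exact ⟨g+1, 2*g+2, by omega, by omega, by omega, by omega, by omega,
          by omega, by omega, Or.inr (by omega)⟩
      · exact ⟨2*g+2, g+1, by omega, by omega, by omega, by omega, by omega,
          by omega, by omega, Or.inl (by omega)⟩
    set S : Set ℕ := {n | n % 3 = 0 ∨ (n % 3 = 1 ∧ a ≤ n) ∨ (n % 3 = 2 ∧ b ≤ n)}
      with hSdef
    have hchar : ∀ n, n ∈ S ↔ n % 3 = 0 ∨ (n % 3 = 1 ∧ a ≤ n) ∨ (n % 3 = 2 ∧ b ≤ n) :=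
      fun n => Iff.rfl
    have hmem : S ∈ {S : Set ℕ | IsNumericalSemigroup S ∧ sgpMult S = 3 ∧ sgpGenus S = g} :=
      ⟨aux_ns ha hb ha4 hb5 hab hba hchar, aux_mult ha hb ha4 hb5 hab hba hchar,
        by rw [aux_genus ha hb ha4 hb5 hab hba hchar]; omega⟩
    rw [h] at hmem
    simp only [Set.mem_setOf_eq] at hmem
    rcases hnotmed with h1 | h1
    · exact aux_not_MED_ab ha hb ha4 hb5 hab hba hchar h1 hmem.2.2.1
    · exact aux_not_MED_ba ha hb ha4 hb5 hab hba hchar h1 hmem.2.2.1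
  · intro hg2
    ext S
    simp only [Set.mem_setOf_eq]
    constructor
    · rintro ⟨hns, hm, hgen⟩
      obtain ⟨a, b, ha, hb, ha4, hb5, hab, hba, hchar⟩ := aux_structure S hns hm
      refine ⟨hns, hm, ?_, hgen⟩
      have hgab : sgpGenus S = a/3 + b/3 := aux_genus ha hb ha4 hb5 hab hba hchar
      have h1 : a < 2*b := by omega
      have h2 : b < 2*a := by omega
      rw [IsMED, hm]
      exact aux_edim3 ha hb ha4 hb5 hab hba hchar h1 h2
    · rintro ⟨h1, h2, _, h4⟩
      exact ⟨h1, h2, h4⟩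
end

section
/- If g ≥ 2 and g ≢ 2 (mod 3), then there is exactly one numerical semigroup of multiplicity 3 and genus g that is not of maximal embedding dimension, namely S = ⟨3, g+1⟩. -/
def Fab (a b : ℕ) : Set ℕ :=
  {n | n % 3 = 0 ∨ (n % 3 = 1 ∧ a ≤ n) ∨ (n % 3 = 2 ∧ b ≤ n)}

lemma mem_Fab {a b n : ℕ} :
    n ∈ Fab a b ↔ (n % 3 = 0 ∨ (n % 3 = 1 ∧ a ≤ n) ∨ (n % 3 = 2 ∧ b ≤ n)) := Iff.rfl

lemma closure_pair_sub {m n : ℕ} :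
    n ∈ (↑(AddSubmonoid.closure {3, m} : AddSubmonoid ℕ) : Set ℕ) ↔
      ∃ p r, r < 3 ∧ n = 3 * p + r * m := by
  rw [SetLike.mem_coe, AddSubmonoid.mem_closure_pair]
  constructor
  · rintro ⟨x, y, rfl⟩
    refine ⟨x + (y / 3) * m, y % 3, by omega, ?_⟩
    simp only [smul_eq_mul]
    have : y * m = 3 * ((y / 3) * m) + (y % 3) * m := by
      conv_lhs => rw [← Nat.div_add_mod y 3]
      ring
    omega
  · rintro ⟨p, r, hr, rfl⟩
    exact ⟨p, r, by simp only [smul_eq_mul]; ring⟩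

/-- closure {3, m} with m % 3 = 1 equals Fab m (2m). -/
lemma closure_eq_Fab1 {m : ℕ} (hm : m % 3 = 1) :
    (↑(AddSubmonoid.closure {3, m} : AddSubmonoid ℕ) : Set ℕ) = Fab m (2 * m) := by
  ext n
  rw [closure_pair_sub, mem_Fab]
  constructor
  · rintro ⟨p, r, hr, rfl⟩
    interval_cases r <;> omega
  · rintro (h | ⟨h1, h2⟩ | ⟨h1, h2⟩)
    · exact ⟨n / 3, 0, by omega, by omega⟩
    · exact ⟨(n - m) / 3, 1, by omega, by omega⟩
    · exact ⟨(n - 2 * m) / 3, 2, by omega, by omega⟩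

lemma closure_eq_Fab2 {m : ℕ} (hm : m % 3 = 2) :
    (↑(AddSubmonoid.closure {3, m} : AddSubmonoid ℕ) : Set ℕ) = Fab (2 * m) m := by
  ext n
  rw [closure_pair_sub, mem_Fab]
  constructor
  · rintro ⟨p, r, hr, rfl⟩
    interval_cases r <;> omega
  · rintro (h | ⟨h1, h2⟩ | ⟨h1, h2⟩)
    · exact ⟨n / 3, 0, by omega, by omega⟩
    · exact ⟨(n - 2 * m) / 3, 2, by omega, by omega⟩
    · exact ⟨(n - m) / 3, 1, by omega, by omega⟩

section FabProps

variable {a b : ℕ} (ha : a % 3 = 1) (hb : b % 3 = 2) (ha4 : 4 ≤ a) (hb5 : 5 ≤ b)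
  (hab : a ≤ 2 * b) (hba : b ≤ 2 * a)

include ha hb hab hba in
lemma Fab_nsg : IsNumericalSemigroup (Fab a b) := by
  refine ⟨by simp [mem_Fab], ?_, ?_⟩
  · intro x hx y hy
    rw [mem_Fab] at *
    omega
  · refine Set.Finite.subset (Set.finite_Iio (a + b)) ?_
    intro n hn
    simp only [Set.mem_compl_iff, mem_Fab] at hn
    simp only [Set.mem_Iio]
    omega

include ha hb ha4 hb5 in
lemma Fab_mult : sgpMult (Fab a b) = 3 := by
  have h3 : (3 : ℕ) ∈ Fab a b \ {0} := by simp [mem_Fab]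
  have hlb : ∀ n ∈ Fab a b \ {0}, 3 ≤ n := by
    rintro n ⟨hn, hn0⟩
    rw [mem_Fab] at hn
    simp only [Set.mem_singleton_iff] at hn0
    omega
  have h1 : sgpMult (Fab a b) ≤ 3 := Nat.sInf_le h3
  have h2 : 3 ≤ sgpMult (Fab a b) := hlb _ (Nat.sInf_mem ⟨3, h3⟩)
  omega

lemma Fab_genus {i j : ℕ} : sgpGenus (Fab (3 * i + 1) (3 * j + 2)) = i + j := by
  have hset : (Fab (3 * i + 1) (3 * j + 2))ᶜ =
      ↑(((Finset.range i).image (fun k => 3 * k + 1)) ∪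
        ((Finset.range j).image (fun k => 3 * k + 2))) := by
    ext n
    simp only [Set.mem_compl_iff, mem_Fab, Finset.coe_union, Set.mem_union, Finset.coe_image,
      Set.mem_image, Finset.mem_coe, Finset.mem_range]
    constructor
    · intro h
      push_neg at h
      rcases (by omega : n % 3 = 1 ∨ n % 3 = 2) with h1 | h1
      · exact Or.inl ⟨n / 3, by omega, by omega⟩
      · exact Or.inr ⟨n / 3, by omega, by omega⟩
    · rintro (⟨k, hk, rfl⟩ | ⟨k, hk, rfl⟩) <;> omega
  rw [sgpGenus, hset, Set.ncard_coe_finset, Finset.card_union_of_disjoint, Finset.card_image_of_injective,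
    Finset.card_image_of_injective, Finset.card_range, Finset.card_range]
  · intro x y h; simp only at h; omega
  · intro x y h; simp only at h; omega
  · rw [Finset.disjoint_left]
    rintro x hx hy
    simp only [Finset.mem_image, Finset.mem_range] at hx hy
    obtain ⟨k, _, rfl⟩ := hx
    obtain ⟨l, _, h⟩ := hy
    omega

include ha hb ha4 hb5 in
lemma Fab_mingens_sub : MinGens (Fab a b) ⊆ {3, a, b} := by
  rintro n ⟨hn, hn0, hmin⟩
  simp only [Set.mem_insert_iff, Set.mem_singleton_iff]
  by_contra hc
  push_neg at hc
  obtain ⟨h3, hna, hnb⟩ := hc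
  rw [mem_Fab] at hn
  rcases hn with h | ⟨h1, h2⟩ | ⟨h1, h2⟩
  · exact hmin 3 (by simp [mem_Fab]) (n - 3) (by simp [mem_Fab]; omega) (by omega)
  · refine hmin a (by simp [mem_Fab]; omega) (n - a) (by simp [mem_Fab]; omega) (by omega)
  · refine hmin b (by simp [mem_Fab]; omega) (n - b) (by simp [mem_Fab]; omega) (by omega)

include ha hb ha4 hb5 in
lemma Fab_three_mem_mingens : 3 ∈ MinGens (Fab a b) := by
  refine ⟨by simp [mem_Fab], by norm_num, ?_⟩
  rintro x ⟨hx, hx0⟩ y ⟨hy, hy0⟩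
  rw [mem_Fab] at hx hy
  simp only [Set.mem_singleton_iff] at hx0 hy0
  omega

include ha hb ha4 hb5 hab in
omit hb5 in
lemma Fab_a_mem_mingens (h : a ≠ 2 * b) : a ∈ MinGens (Fab a b) := by
  refine ⟨by rw [mem_Fab]; omega, by omega, ?_⟩
  rintro x ⟨hx, hx0⟩ y ⟨hy, hy0⟩
  rw [mem_Fab] at hx hy
  simp only [Set.mem_singleton_iff] at hx0 hy0
  omega

include ha hb ha4 hb5 hba in
omit ha4 in
lemma Fab_b_mem_mingens (h : b ≠ 2 * a) : b ∈ MinGens (Fab a b) := by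
  refine ⟨by rw [mem_Fab]; omega, by omega, ?_⟩
  rintro x ⟨hx, hx0⟩ y ⟨hy, hy0⟩
  rw [mem_Fab] at hx hy
  simp only [Set.mem_singleton_iff] at hx0 hy0
  omega

end FabProps

section Struct

lemma exists_mem_res (S : Set ℕ) (hfin : Sᶜ.Finite) (r : ℕ) (hr : r < 3) :
    ∃ n ∈ S, n % 3 = r := by
  by_contra hc
  push_neg at hc
  have hsub : {n : ℕ | n % 3 = r ∧ 0 < n} ⊆ Sᶜ := by
    intro n hn
    simp only [Set.mem_setOf_eq] at hn
    intro hnS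
    exact absurd (hc n hnS) (by omega)
  have hinf : {n : ℕ | n % 3 = r ∧ 0 < n}.Infinite := by
    apply Set.infinite_of_injective_forall_mem (f := fun k : ℕ => 3 * k + 3 + r)
    case hi => intro x y h; simp only at h; omega
    case hf => intro k; simp only [Set.mem_setOf_eq]; omega
  exact hinf (hfin.subset hsub)

/-- Structure: any numerical semigroup of multiplicity 3 is `Fab a b`. -/
lemma struct_mult3 (S : Set ℕ) (hS : IsNumericalSemigroup S) (hm : sgpMult S = 3) :
    ∃ a b, a % 3 = 1 ∧ b % 3 = 2 ∧ 4 ≤ a ∧ 5 ≤ b ∧ a ≤ 2 * b ∧ b ≤ 2 * a ∧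
      S = Fab a b := by
  obtain ⟨h0, hadd, hfin⟩ := hS
  -- 3 ∈ S
  have hne : (S \ {0}).Nonempty := by
    obtain ⟨n, hn, hr⟩ := exists_mem_res S hfin 1 (by norm_num)
    exact ⟨n, hn, by simp; omega⟩
  have h3 : 3 ∈ S ∧ (3:ℕ) ≠ 0 := by
    have := Nat.sInf_mem hne
    rw [show sInf (S \ {0}) = sgpMult S from rfl, hm] at this
    exact ⟨this.1, by norm_num⟩
  have hlb : ∀ n ∈ S, n ≠ 0 → 3 ≤ n := by
    intro n hn hn0
    have : sgpMult S ≤ n := Nat.sInf_le ⟨hn, hn0⟩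
    omega
  obtain ⟨a0, ha0S, ha0r⟩ := exists_mem_res S hfin 1 (by norm_num)
  obtain ⟨b0, hb0S, hb0r⟩ := exists_mem_res S hfin 2 (by norm_num)
  set A := {n ∈ S | n % 3 = 1} with hA
  set B := {n ∈ S | n % 3 = 2} with hB
  have hAne : A.Nonempty := ⟨a0, ha0S, ha0r⟩
  have hBne : B.Nonempty := ⟨b0, hb0S, hb0r⟩
  set a := sInf A with hadef
  set b := sInf B with hbdef
  obtain ⟨haS, har⟩ : a ∈ S ∧ a % 3 = 1 := Nat.sInf_mem hAne
  obtain ⟨hbS, hbr⟩ : b ∈ S ∧ b % 3 = 2 := Nat.sInf_mem hBne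
  have ha4 : 4 ≤ a := by have := hlb a haS (by omega); omega
  have hb5 : 5 ≤ b := by have := hlb b hbS (by omega); omega
  have hmul3 : ∀ k, 3 * k ∈ S := by
    intro k
    induction k with
    | zero => simpa using h0
    | succ n ih =>
        have := hadd _ ih _ h3.1
        have e : 3 * (n + 1) = 3 * n + 3 := by ring
        rwa [e]
  have hSeq : S = Fab a b := by
    ext n
    rw [mem_Fab]
    constructor
    · intro hn
      rcases (by omega : n % 3 = 0 ∨ n % 3 = 1 ∨ n % 3 = 2) with h | h | h
      · exact Or.inl h
      · exact Or.inr (Or.inl ⟨h, Nat.sInf_le ⟨hn, h⟩⟩)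
      · exact Or.inr (Or.inr ⟨h, Nat.sInf_le ⟨hn, h⟩⟩)
    · rintro (h | ⟨h1, h2⟩ | ⟨h1, h2⟩)
      · have := hmul3 (n / 3); convert this using 1; omega
      · have := hadd a haS _ (hmul3 ((n - a) / 3))
        convert this using 1; omega
      · have := hadd b hbS _ (hmul3 ((n - b) / 3))
        convert this using 1; omega
  have h2a : b ≤ 2 * a := Nat.sInf_le ⟨by have := hadd a haS a haS; rwa [show a + a = 2 * a by ring] at this, by omega⟩
  have h2b : a ≤ 2 * b := Nat.sInf_le ⟨by have := hadd b hbS b hbS; rwa [show b + b = 2 * b by ring] at this, by omega⟩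
  exact ⟨a, b, har, hbr, ha4, hb5, h2b, h2a, hSeq⟩

end Struct

section MED

variable {a b : ℕ} (ha : a % 3 = 1) (hb : b % 3 = 2) (ha4 : 4 ≤ a) (hb5 : 5 ≤ b)
  (hab : a ≤ 2 * b) (hba : b ≤ 2 * a)

include ha hb ha4 hb5 hab hba in
lemma Fab_med (h1 : a ≠ 2 * b) (h2 : b ≠ 2 * a) : IsMED (Fab a b) := by
  have hmg : MinGens (Fab a b) = {3, a, b} := by
    apply Set.Subset.antisymm (Fab_mingens_sub ha hb ha4 hb5)
    rintro n (rfl | rfl | rfl)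
    · exact Fab_three_mem_mingens ha hb ha4 hb5
    · exact Fab_a_mem_mingens ha hb ha4 hab h1
    · exact Fab_b_mem_mingens ha hb hb5 hba h2
  rw [IsMED, Fab_mult ha hb ha4 hb5, sgpEdim, hmg]
  exact Set.ncard_eq_three.mpr ⟨3, a, b, by omega, by omega, by omega, rfl⟩

include ha hb ha4 hb5 in
lemma Fab_not_med_b (h2 : b = 2 * a) : ¬ IsMED (Fab a b) := by
  have hsub : MinGens (Fab a b) ⊆ {3, a} := by
    intro n hn
    have := Fab_mingens_sub ha hb ha4 hb5 hn
    rcases this with rfl | rfl | rfl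
    · exact Set.mem_insert _ _
    · exact Set.mem_insert_iff.mpr (Or.inr rfl)
    · exfalso
      obtain ⟨_, _, hmin⟩ := hn
      exact hmin a ⟨by rw [mem_Fab]; omega, by simp; omega⟩ a ⟨by rw [mem_Fab]; omega, by simp; omega⟩ (by omega)
  have hle : sgpEdim (Fab a b) ≤ 2 := by
    calc sgpEdim (Fab a b) ≤ ({3, a} : Set ℕ).ncard :=
          Set.ncard_le_ncard hsub (Set.toFinite _)
      _ ≤ 2 := by
          calc ({3, a} : Set ℕ).ncard ≤ ({a} : Set ℕ).ncard + 1 := Set.ncard_insert_le _ _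
            _ ≤ 2 := by rw [Set.ncard_singleton]
  rw [IsMED, Fab_mult ha hb ha4 hb5]
  omega

include ha hb ha4 hb5 in
lemma Fab_not_med_a (h2 : a = 2 * b) : ¬ IsMED (Fab a b) := by
  have hsub : MinGens (Fab a b) ⊆ {3, b} := by
    intro n hn
    have := Fab_mingens_sub ha hb ha4 hb5 hn
    rcases this with rfl | rfl | rfl
    · exact Set.mem_insert _ _
    · exfalso
      obtain ⟨_, _, hmin⟩ := hn
      exact hmin b ⟨by rw [mem_Fab]; omega, by simp; omega⟩ b ⟨by rw [mem_Fab]; omega, by simp; omega⟩ (by omega)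
    · exact Set.mem_insert_iff.mpr (Or.inr rfl)
  have hle : sgpEdim (Fab a b) ≤ 2 := by
    calc sgpEdim (Fab a b) ≤ ({3, b} : Set ℕ).ncard :=
          Set.ncard_le_ncard hsub (Set.toFinite _)
      _ ≤ 2 := by
          calc ({3, b} : Set ℕ).ncard ≤ ({b} : Set ℕ).ncard + 1 := Set.ncard_insert_le _ _
            _ ≤ 2 := by rw [Set.ncard_singleton]
  rw [IsMED, Fab_mult ha hb ha4 hb5]
  omega

end MED

/-- For `g ≥ 2` with `g ≢ 2 (mod 3)`, there is exactly one numerical semigroup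
of multiplicity 3 and genus `g` which is not of maximal embedding dimension,
namely `⟨3, g+1⟩`. -/
theorem unique_non_med_mult_three (g : ℕ) (hg : 2 ≤ g) (hmod : g % 3 ≠ 2) :
    {S : Set ℕ | IsNumericalSemigroup S ∧ sgpMult S = 3 ∧ sgpGenus S = g ∧
        ¬ IsMED S} =
      {(↑(AddSubmonoid.closure {3, g + 1} : AddSubmonoid ℕ) : Set ℕ)} := by
  ext S
  simp only [Set.mem_setOf_eq, Set.mem_singleton_iff]
  constructor
  · rintro ⟨hS, hm, hgen, hmed⟩
    obtain ⟨a, b, ha, hb, ha4, hb5, hab, hba, rfl⟩ := struct_mult3 S hS hm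
    obtain ⟨i, rfl⟩ : ∃ i, a = 3 * i + 1 := ⟨a / 3, by omega⟩
    obtain ⟨j, rfl⟩ : ∃ j, b = 3 * j + 2 := ⟨b / 3, by omega⟩
    rw [Fab_genus] at hgen
    have hor : 3 * i + 1 = 2 * (3 * j + 2) ∨ 3 * j + 2 = 2 * (3 * i + 1) := by
      by_contra hc
      push_neg at hc
      exact hmed (Fab_med ha hb ha4 hb5 hab hba hc.1 hc.2)
    rcases hor with h | h
    · have hg1 : (g + 1) % 3 = 2 := by omega
      rw [closure_eq_Fab2 hg1, show (2 * (g + 1)) = 3 * i + 1 by omega,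
        show (g + 1) = 3 * j + 2 by omega]
    · have hg1 : (g + 1) % 3 = 1 := by omega
      rw [closure_eq_Fab1 hg1, show (2 * (g + 1)) = 3 * j + 2 by omega,
        show (g + 1) = 3 * i + 1 by omega]
  · rintro rfl
    rcases (by omega : g % 3 = 0 ∨ g % 3 = 1) with h | h
    · obtain ⟨i, rfl⟩ : ∃ i, g = 3 * i := ⟨g / 3, by omega⟩
      have hi1 : 1 ≤ i := by omega
      have hg1 : (3 * i + 1) % 3 = 1 := by omega
      rw [closure_eq_Fab1 hg1, show (2 * (3 * i + 1)) = 3 * (2 * i) + 2 by ring]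
      have ha : (3 * i + 1) % 3 = 1 := by omega
      have hb : (3 * (2 * i) + 2) % 3 = 2 := by omega
      have ha4 : 4 ≤ 3 * i + 1 := by omega
      have hb5 : 5 ≤ 3 * (2 * i) + 2 := by omega
      refine ⟨Fab_nsg ha hb (by omega) (by omega), Fab_mult ha hb ha4 hb5, ?_, ?_⟩
      · rw [Fab_genus]; omega
      · exact Fab_not_med_b ha hb ha4 hb5 (by omega)
    · obtain ⟨j, rfl⟩ : ∃ j, g = 3 * j + 1 := ⟨g / 3, by omega⟩
      have hg1 : (3 * j + 1 + 1) % 3 = 2 := by omega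
      rw [closure_eq_Fab2 hg1, show (2 * (3 * j + 1 + 1)) = 3 * (2 * j + 1) + 1 by ring,
        show (3 * j + 1 + 1) = 3 * j + 2 by ring]
      have ha : (3 * (2 * j + 1) + 1) % 3 = 1 := by omega
      have hb : (3 * j + 2) % 3 = 2 := by omega
      have ha4 : 4 ≤ 3 * (2 * j + 1) + 1 := by omega
      have hb5 : 5 ≤ 3 * j + 2 := by omega
      refine ⟨Fab_nsg ha hb (by omega) (by omega), Fab_mult ha hb ha4 hb5, ?_, ?_⟩
      · rw [Fab_genus]; omega
      · exact Fab_not_med_a ha hb ha4 hb5 (by omega)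
end

section
/- Let F be a positive integer not divisible by 3. The number of maximal embedding dimension numerical semigroups with multiplicity 3 and Frobenius number F equals ⌊(F+1)/3⌋ − ⌈(F+2)/6⌉ + 1. -/
namespace MedAux

/-- The numerical semigroup of multiplicity 3 with Apéry elements `F + 3` and `z`. -/
def Sem (F z : ℕ) : Set ℕ :=
  {n | n % 3 = 0 ∨ (n % 3 = F % 3 ∧ F + 3 ≤ n) ∨ (n % 3 + F % 3 = 3 ∧ z ≤ n)}

lemma mem_Sem {F z n : ℕ} :
    n ∈ Sem F z ↔ (n % 3 = 0 ∨ (n % 3 = F % 3 ∧ F + 3 ≤ n) ∨ (n % 3 + F % 3 = 3 ∧ z ≤ n)) :=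
  Iff.rfl

lemma mem_Sem_diff {F z n : ℕ} :
    n ∈ Sem F z \ {0} ↔ ((n % 3 = 0 ∨ (n % 3 = F % 3 ∧ F + 3 ≤ n) ∨ (n % 3 + F % 3 = 3 ∧ z ≤ n))
      ∧ n ≠ 0) := by
  rw [Set.mem_diff, mem_Sem, Set.mem_singleton_iff]

variable {F z : ℕ}

lemma sem_gap_le (h3 : F % 3 ≠ 0) (hzF : z ≤ F + 2) (hzr : z % 3 + F % 3 = 3)
    {n : ℕ} (hn : n ∉ Sem F z) : n ≤ F := by
  rw [mem_Sem] at hn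
  have h1 : F % 3 = 1 ∨ F % 3 = 2 := by omega
  rcases h1 with h1 | h1 <;> omega

lemma sem_ns (hF : 0 < F) (h3 : F % 3 ≠ 0) (hmed : F + 3 < 2 * z) (hzF : z ≤ F + 2)
    (hzr : z % 3 + F % 3 = 3) : IsNumericalSemigroup (Sem F z) := by
  refine ⟨by simp [mem_Sem], fun a ha b hb => ?_, ?_⟩
  · rw [mem_Sem] at ha hb ⊢; omega
  · exact Set.Finite.subset (Set.finite_Iic F) (fun n hn => sem_gap_le h3 hzF hzr hn)

lemma sem_mult (hF : 0 < F) (h3 : F % 3 ≠ 0) (hz4 : 4 ≤ z) (hzF : z ≤ F + 2)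
    (hzr : z % 3 + F % 3 = 3) : sgpMult (Sem F z) = 3 := by
  have h3mem : (3 : ℕ) ∈ Sem F z \ {0} := by rw [mem_Sem_diff]; omega
  refine le_antisymm (Nat.sInf_le h3mem) (le_csInf ⟨3, h3mem⟩ ?_)
  intro b hb
  rw [mem_Sem_diff] at hb
  omega

lemma sem_frob (hF : 0 < F) (h3 : F % 3 ≠ 0) (hz4 : 4 ≤ z) (hzF : z ≤ F + 2)
    (hzr : z % 3 + F % 3 = 3) : sgpFrob (Sem F z) = F := by
  have hFmem : F ∈ (Sem F z)ᶜ := by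
    simp only [Set.mem_compl_iff, mem_Sem]; omega
  have hbdd : ∀ n ∈ (Sem F z)ᶜ, n ≤ F := fun n hn => sem_gap_le h3 hzF hzr hn
  exact le_antisymm (csSup_le ⟨F, hFmem⟩ hbdd) (le_csSup ⟨F, hbdd⟩ hFmem)

lemma sem_mingens_subset (h3 : F % 3 ≠ 0) (hz4 : 4 ≤ z) (hzr : z % 3 + F % 3 = 3) :
    MinGens (Sem F z) ⊆ {3, F + 3, z} := by
  rintro n ⟨hn, hn0, hmin⟩
  by_contra hne
  simp only [Set.mem_insert_iff, Set.mem_singleton_iff, not_or] at hne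
  obtain ⟨e1, e2, e3⟩ := hne
  rw [mem_Sem] at hn
  have hsplit : F % 3 = 1 ∨ F % 3 = 2 := by omega
  have key : (3:ℕ) ∈ Sem F z \ {0} := by
    rw [mem_Sem_diff]; omega
  have key2 : n - 3 ∈ Sem F z \ {0} := by
    rw [mem_Sem_diff]
    rcases hsplit with h1 | h1 <;> omega
  exact hmin 3 key (n - 3) key2 (by omega)

lemma sem_mingens (hF : 0 < F) (h3 : F % 3 ≠ 0) (hmed : F + 3 < 2 * z) (hz4 : 4 ≤ z)
    (hzF : z ≤ F + 2) (hzr : z % 3 + F % 3 = 3) :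
    MinGens (Sem F z) = {3, F + 3, z} := by
  refine le_antisymm (sem_mingens_subset h3 hz4 hzr) ?_
  have hsplit : F % 3 = 1 ∨ F % 3 = 2 := by omega
  rintro n hn
  simp only [Set.mem_insert_iff, Set.mem_singleton_iff] at hn
  refine ⟨?_, ?_, ?_⟩
  · rw [mem_Sem]; rcases hn with h|h|h <;> subst h <;> omega
  · rcases hn with h|h|h <;> omega
  · rintro a ⟨ha, ha0⟩ b ⟨hb, hb0⟩
    rw [mem_Sem] at ha hb
    simp only [Set.mem_singleton_iff] at ha0 hb0
    rcases hn with h|h|h <;> subst h <;> rcases hsplit with h1 | h1 <;> omega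

lemma sem_edim (hF : 0 < F) (h3 : F % 3 ≠ 0) (hmed : F + 3 < 2 * z) (hz4 : 4 ≤ z)
    (hzF : z ≤ F + 2) (hzr : z % 3 + F % 3 = 3) : sgpEdim (Sem F z) = 3 := by
  rw [sgpEdim, sem_mingens hF h3 hmed hz4 hzF hzr, Set.ncard_eq_three]
  exact ⟨3, F + 3, z, by omega, by omega, by omega, rfl⟩

lemma forward {S : Set ℕ} {F : ℕ} (hF : 0 < F) (h3 : F % 3 ≠ 0)
    (hS : IsNumericalSemigroup S) (hm : sgpMult S = 3) (hmed : IsMED S)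
    (hfrob : sgpFrob S = F) :
    ∃ z, (F + 3 < 2 * z ∧ z ≤ F + 2 ∧ z % 3 + F % 3 = 3) ∧ S = Sem F z := by
  obtain ⟨h0, hadd, hfin⟩ := hS
  have hsplit : F % 3 = 1 ∨ F % 3 = 2 := by omega
  unfold sgpMult at hm
  unfold sgpFrob at hfrob
  obtain ⟨B, hB⟩ := hfin.bddAbove
  have hbig : ∀ n, B < n → n ∈ S := by
    intro n hn; by_contra h
    exact absurd (hB h) (by omega)
  have hge3 : ∀ n ∈ S, n ≠ 0 → 3 ≤ n := by
    intro n hn hn0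
    have := Nat.sInf_le (show n ∈ S \ {0} from ⟨hn, fun h => hn0 h⟩)
    omega
  have h3m : (3:ℕ) ∈ S := by
    have hne : (S \ {0}).Nonempty := ⟨B + 1, hbig _ (by omega), by simp⟩
    have := Nat.sInf_mem hne
    rw [hm] at this
    exact this.1
  have mult3 : ∀ k, 3 * k ∈ S := by
    intro k
    induction k with
    | zero => simpa using h0
    | succ n ih =>
        have := hadd _ ih 3 h3m
        have h' : 3 * (n + 1) = 3 * n + 3 := by ring
        rwa [h']
  have hstep : ∀ a ∈ S, ∀ k, a + 3 * k ∈ S := fun a ha k => hadd a ha (3 * k) (mult3 k)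
  have h1S : (1:ℕ) ∉ S := fun h => by have := hge3 1 h (by omega); omega
  have hFnotin : F ∉ S := by
    have hne : Sᶜ.Nonempty := ⟨1, h1S⟩
    have hmem := Nat.sSup_mem hne hfin.bddAbove
    rwa [hfrob] at hmem
  have hgap : ∀ n, n ∉ S → n ≤ F := by
    intro n hn
    have := le_csSup hfin.bddAbove (show n ∈ Sᶜ from hn)
    omega
  have habove : ∀ n, F < n → n ∈ S := by
    intro n h; by_contra hn
    exact absurd (hgap n hn) (by omega)
  have hAne : (3 * (F + 1) + (3 - F % 3)) ∈ {n : ℕ | n ∈ S ∧ n % 3 + F % 3 = 3} := by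
    refine ⟨habove _ (by omega), ?_⟩
    rcases hsplit with h1 | h1 <;> omega
  have hzA : sInf {n : ℕ | n ∈ S ∧ n % 3 + F % 3 = 3} ∈
      {n : ℕ | n ∈ S ∧ n % 3 + F % 3 = 3} := Nat.sInf_mem ⟨_, hAne⟩
  set z := sInf {n : ℕ | n ∈ S ∧ n % 3 + F % 3 = 3} with hzdef
  have hzmin : ∀ n, n ∈ S → n % 3 + F % 3 = 3 → z ≤ n := fun n hn hr =>
    Nat.sInf_le ⟨hn, hr⟩
  have hzr : z % 3 + F % 3 = 3 := hzA.2
  have hz4 : 4 ≤ z := by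
    have := hge3 z hzA.1 (by omega)
    omega
  have hz3 : z - 3 ∉ S := by
    intro h
    have := hzmin (z - 3) h (by omega)
    omega
  have hzF : z ≤ F + 2 := by
    have := hgap _ hz3
    omega
  have hxF : ∀ n ∈ S, n % 3 = F % 3 → F + 3 ≤ n := by
    intro n hn hr
    by_contra hlt
    have heq : F = n + 3 * ((F - n) / 3) := by omega
    exact hFnotin (heq ▸ hstep n hn _)
  have hSeq : S = Sem F z := by
    ext n
    rw [mem_Sem]
    constructor
    · intro hn
      rcases (by omega : n % 3 = 0 ∨ n % 3 = F % 3 ∨ n % 3 + F % 3 = 3) with h | h | h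
      · exact Or.inl h
      · exact Or.inr (Or.inl ⟨h, hxF n hn h⟩)
      · exact Or.inr (Or.inr ⟨h, hzmin n hn h⟩)
    · rintro (h | ⟨h, hle⟩ | ⟨h, hle⟩)
      · exact (show n = 3 * (n / 3) by omega) ▸ mult3 (n / 3)
      · have hF3 : F + 3 ∈ S := habove _ (by omega)
        exact (show n = (F + 3) + 3 * ((n - (F + 3)) / 3) by omega) ▸ hstep _ hF3 _
      · exact (show n = z + 3 * ((n - z) / 3) by omega) ▸ hstep _ hzA.1 _
  have h2z : F + 3 < 2 * z := by
    by_contra hc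
    push_neg at hc
    have h2zS : 2 * z ∈ S := by
      have := hadd z hzA.1 z hzA.1
      rwa [show z + z = 2 * z by ring] at this
    have h2zge := hxF (2 * z) h2zS (by rcases hsplit with h1 | h1 <;> omega)
    have hFz : F + 3 = z + z := by omega
    have hzS0 : z ∈ S \ {0} := ⟨hzA.1, by simp; omega⟩
    have hsub : MinGens S ⊆ {3, z} := by
      intro n hn
      have hn' := sem_mingens_subset h3 hz4 hzr (hSeq ▸ hn)
      rcases hn' with h | h | h
      · exact Or.inl h
      · exfalso
        obtain ⟨hnS, hn0, hmin⟩ := hn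
        exact hmin z hzS0 z hzS0 (by omega)
      · exact Or.inr h
    have hle2 : sgpEdim S ≤ 2 := by
      refine le_trans (Set.ncard_le_ncard hsub ((Set.finite_singleton z).insert 3)) ?_
      have := Set.ncard_insert_le 3 ({z} : Set ℕ)
      simpa [Set.ncard_singleton] using this
    rw [IsMED, sgpMult, hm] at hmed
    omega
  exact ⟨z, ⟨h2z, hzF, hzr⟩, hSeq⟩

lemma cnt (r : ℕ) (hr : r < 3) (N : ℕ) :
    ((Finset.range N).filter (fun x => x % 3 = r)).card = (N + 2 - r) / 3 := by
  induction N with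
  | zero => simp only [Finset.range_zero, Finset.filter_empty, Finset.card_empty]; omega
  | succ n ih =>
      rw [Finset.range_add_one, Finset.filter_insert]
      by_cases h : n % 3 = r
      · rw [if_pos h, Finset.card_insert_of_notMem (by simp)]
        omega
      · rw [if_neg h]
        omega

lemma count_eq (F : ℕ) (hF : 0 < F) (h3' : F % 3 ≠ 0) :
    ((((Finset.range (F + 3)).filter (fun x => F + 3 < 2 * x ∧ x % 3 + F % 3 = 3)).card : ℤ)
      = ⌊((F : ℚ) + 1) / 3⌋ - ⌈((F : ℚ) + 2) / 6⌉ + 1) := by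
  have hsd : (Finset.range (F + 3)).filter (fun x => F + 3 < 2 * x ∧ x % 3 + F % 3 = 3)
      = ((Finset.range (F + 3)).filter (fun x => x % 3 = 3 - F % 3))
        \ ((Finset.range ((F + 5) / 2)).filter (fun x => x % 3 = 3 - F % 3)) := by
    ext x
    simp only [Finset.mem_filter, Finset.mem_sdiff, Finset.mem_range, not_and, not_lt]
    omega
  have hsub : ((Finset.range ((F + 5) / 2)).filter (fun x => x % 3 = 3 - F % 3))
      ⊆ ((Finset.range (F + 3)).filter (fun x => x % 3 = 3 - F % 3)) :=
    Finset.filter_subset_filter _ (Finset.range_subset_range.2 (by omega))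
  have hle := Finset.card_le_card hsub
  have hmain : (((Finset.range (F + 3)).filter
        (fun x => F + 3 < 2 * x ∧ x % 3 + F % 3 = 3)).card : ℤ)
      = (((F + 3 + 2 - (3 - F % 3)) / 3 : ℕ) : ℤ)
        - ((((F + 5) / 2 + 2 - (3 - F % 3)) / 3 : ℕ) : ℤ) := by
    rw [hsd, Finset.card_sdiff_of_subset hsub, Nat.cast_sub hle,
      cnt _ (by omega) _, cnt _ (by omega) _]
  rw [hmain]
  have hfl : ⌊((F : ℚ) + 1) / 3⌋ = (F + 1 : ℤ) / 3 := by
    rw [show ((F : ℚ) + 1) / 3 = ((F + 1 : ℤ) : ℚ) / ((3 : ℕ) : ℚ) by push_cast; ring]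
    exact Rat.floor_intCast_div_natCast _ _
  have hcl : ⌈((F : ℚ) + 2) / 6⌉ = -((-(F + 2) : ℤ) / 6) := by
    have h1 : ⌊-(((F : ℚ) + 2) / 6)⌋ = -⌈((F : ℚ) + 2) / 6⌉ := Int.floor_neg
    have h2 : ⌊-(((F : ℚ) + 2) / 6)⌋ = (-(F + 2) : ℤ) / 6 := by
      rw [show -(((F : ℚ) + 2) / 6) = ((-(F + 2) : ℤ) : ℚ) / ((6 : ℕ) : ℚ) by push_cast; ring]
      exact Rat.floor_intCast_div_natCast _ _
    omega
  rw [hfl, hcl]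
  have h6 : F % 6 = 1 ∨ F % 6 = 2 ∨ F % 6 = 4 ∨ F % 6 = 5 := by omega
  rcases h6 with h6 | h6 | h6 | h6 <;> omega

end MedAux

/-- The number of maximal embedding dimension numerical semigroups with
multiplicity 3 and Frobenius number `F` (with `F > 0` not divisible by 3) is
`⌊(F+1)/3⌋ − ⌈(F+2)/6⌉ + 1`. -/
theorem count_med_mult_three_frobenius (F : ℕ) (hF : 0 < F) (h3 : ¬ (3 ∣ F)) :
    (Set.ncard {S : Set ℕ | IsNumericalSemigroup S ∧ sgpMult S = 3 ∧ IsMED S ∧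
        sgpFrob S = F} : ℤ) = ⌊((F : ℚ) + 1) / 3⌋ - ⌈((F : ℚ) + 2) / 6⌉ + 1 := by
  have h3' : F % 3 ≠ 0 := fun h => h3 (Nat.dvd_of_mod_eq_zero h)
  set T : Finset ℕ :=
    (Finset.range (F + 3)).filter (fun x => F + 3 < 2 * x ∧ x % 3 + F % 3 = 3) with hT
  have hmemT : ∀ x, x ∈ T ↔ (x < F + 3 ∧ F + 3 < 2 * x ∧ x % 3 + F % 3 = 3) := by
    intro x
    rw [hT, Finset.mem_filter, Finset.mem_range]
  have hsetq : {S : Set ℕ | IsNumericalSemigroup S ∧ sgpMult S = 3 ∧ IsMED S ∧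
      sgpFrob S = F} = MedAux.Sem F '' (T : Set ℕ) := by
    ext S
    simp only [Set.mem_setOf_eq, Set.mem_image, Finset.mem_coe]
    constructor
    · rintro ⟨h1, h2, h4, h5⟩
      obtain ⟨z, ⟨hz1, hz2, hz3⟩, hz4⟩ := MedAux.forward hF h3' h1 h2 h4 h5
      exact ⟨z, (hmemT z).2 ⟨by omega, hz1, hz3⟩, hz4.symm⟩
    · rintro ⟨z, hz, rfl⟩
      obtain ⟨hzlt, hz1, hz3⟩ := (hmemT z).1 hz
      have hz4 : 4 ≤ z := by omega
      have hz2 : z ≤ F + 2 := by omega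
      refine ⟨MedAux.sem_ns hF h3' hz1 hz2 hz3, MedAux.sem_mult hF h3' hz4 hz2 hz3, ?_,
        MedAux.sem_frob hF h3' hz4 hz2 hz3⟩
      rw [IsMED, MedAux.sem_edim hF h3' hz1 hz4 hz2 hz3, MedAux.sem_mult hF h3' hz4 hz2 hz3]
  have hinj : Set.InjOn (MedAux.Sem F) (T : Set ℕ) := by
    intro a ha b hb hab
    rw [Finset.mem_coe, hmemT] at ha hb
    have haa : a ∈ MedAux.Sem F a := by rw [MedAux.mem_Sem]; omega
    have hbb : b ∈ MedAux.Sem F b := by rw [MedAux.mem_Sem]; omega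
    rw [hab] at haa
    rw [← hab] at hbb
    rw [MedAux.mem_Sem] at haa hbb
    omega
  rw [hsetq, Set.ncard_image_of_injOn hinj, Set.ncard_coe_finset]
  exact MedAux.count_eq F hF h3'
end

section
/- Let g and F be positive integers with F not divisible by 3. There exists exactly one numerical semigroup with multiplicity 3, genus g, and Frobenius number F (when any such semigroup exists), namely S = ⟨3, F+3, 3g−F⟩; in particular, a numerical semigroup of multiplicity 3 is completely determined by its genus and Frobenius number. -/
-- count of {n | n % 3 = r ∧ n < A} when A % 3 = r (r = 1 or 2) is A/3
lemma ncard_res_lt (r A : ℕ) (hr : r = 1 ∨ r = 2) (hA : A % 3 = r) :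
    Set.ncard {n : ℕ | n % 3 = r ∧ n < A} = A / 3 := by
  have hset : {n : ℕ | n % 3 = r ∧ n < A} =
      ↑((Finset.range (A / 3)).image fun k => 3 * k + r) := by
    ext n
    simp only [Set.mem_setOf_eq, Finset.coe_image, Set.mem_image, Finset.mem_coe,
      Finset.mem_range]
    constructor
    · rintro ⟨h1, h2⟩
      exact ⟨n / 3, by omega, by omega⟩
    · rintro ⟨k, hk, rfl⟩
      omega
  rw [hset, Set.ncard_coe_finset, Finset.card_image_of_injective _ (fun a b h => by omega),
    Finset.card_range]

/-- A numerical semigroup of multiplicity 3 is completely determined by its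
genus `g` and Frobenius number `F`: it must equal `⟨3, F+3, 3g−F⟩`. In
particular there is at most one such semigroup for each pair `(g, F)`. -/
theorem unique_mult_three_genus_frobenius (g F : ℕ) (hg : 0 < g) (hF : 0 < F)
    (h3 : ¬ (3 ∣ F)) :
    ∀ S : Set ℕ, IsNumericalSemigroup S → sgpMult S = 3 → sgpGenus S = g →
      sgpFrob S = F →
      S = (AddSubmonoid.closure {3, F + 3, 3 * g - F} : AddSubmonoid ℕ) := by
  intro S hS hm hgen hfrob
  obtain ⟨h0, hadd, hfin⟩ := hS
  unfold sgpMult at hm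
  unfold sgpGenus at hgen
  unfold sgpFrob at hfrob
  have hbdd : BddAbove Sᶜ := hfin.bddAbove
  -- everything above F is in S
  have hlarge : ∀ n, F < n → n ∈ S := by
    intro n hn
    by_contra h
    have : n ≤ sSup Sᶜ := le_csSup hbdd h
    omega
  -- 3 ∈ S
  have h3S : (3 : ℕ) ∈ S := by
    have hne : (S \ {0}).Nonempty := ⟨F + 1, hlarge _ (by omega), by simp⟩
    have := Nat.sInf_mem hne
    rw [hm] at this
    exact this.1
  have h1S : (1 : ℕ) ∉ S := by
    intro h
    have : sInf (S \ {0}) ≤ 1 := Nat.sInf_le ⟨h, by simp⟩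
    omega
  have h2S : (2 : ℕ) ∉ S := by
    intro h
    have : sInf (S \ {0}) ≤ 2 := Nat.sInf_le ⟨h, by simp⟩
    omega
  -- adding multiples of 3
  have hstep : ∀ n ∈ S, ∀ k, n + 3 * k ∈ S := by
    intro n hn k
    induction k with
    | zero => simpa using hn
    | succ m ih =>
      have h := hadd _ ih _ h3S
      have e : n + 3 * (m + 1) = n + 3 * m + 3 := by ring
      rw [e]; exact h
  have hmul3 : ∀ k, 3 * k ∈ S := by
    intro k
    have := hstep 0 h0 k
    simpa using this
  -- least elements in residue classes 1 and 2
  obtain ⟨A, hAS, hAmod, hAle⟩ :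
      ∃ A, A ∈ S ∧ A % 3 = 1 ∧ ∀ n ∈ S, n % 3 = 1 → A ≤ n := by
    have hne : {s : ℕ | s ∈ S ∧ s % 3 = 1}.Nonempty :=
      ⟨3 * F + 1, hlarge _ (by omega), by omega⟩
    obtain ⟨h1, h2⟩ := Nat.sInf_mem hne
    exact ⟨_, h1, h2, fun n hn hmod => Nat.sInf_le ⟨hn, hmod⟩⟩
  obtain ⟨B, hBS, hBmod, hBle⟩ :
      ∃ B, B ∈ S ∧ B % 3 = 2 ∧ ∀ n ∈ S, n % 3 = 2 → B ≤ n := by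
    have hne : {s : ℕ | s ∈ S ∧ s % 3 = 2}.Nonempty :=
      ⟨3 * F + 2, hlarge _ (by omega), by omega⟩
    obtain ⟨h1, h2⟩ := Nat.sInf_mem hne
    exact ⟨_, h1, h2, fun n hn hmod => Nat.sInf_le ⟨hn, hmod⟩⟩
  have hA4 : 4 ≤ A := by
    rcases Nat.lt_or_ge A 4 with h | h
    · exfalso
      have hA1 : A = 1 := by omega
      rw [hA1] at hAS
      exact h1S hAS
    · exact h
  have hB5 : 5 ≤ B := by
    rcases Nat.lt_or_ge B 5 with h | h
    · exfalso
      have hB2 : B = 2 := by omega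
      rw [hB2] at hBS
      exact h2S hBS
    · exact h
  -- characterization of S
  have hchar : ∀ n, n ∈ S ↔ (n % 3 = 0 ∨ (n % 3 = 1 ∧ A ≤ n) ∨ (n % 3 = 2 ∧ B ≤ n)) := by
    intro n
    constructor
    · intro hn
      have hmod : n % 3 = 0 ∨ n % 3 = 1 ∨ n % 3 = 2 := by omega
      rcases hmod with h | h | h
      · exact Or.inl h
      · exact Or.inr (Or.inl ⟨h, hAle n hn h⟩)
      · exact Or.inr (Or.inr ⟨h, hBle n hn h⟩)
    · rintro (h | ⟨h1, h2⟩ | ⟨h1, h2⟩)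
      · obtain ⟨k, rfl⟩ : ∃ k, n = 3 * k := ⟨n / 3, by omega⟩
        exact hmul3 k
      · have heq : n = A + 3 * ((n - A) / 3) := by omega
        rw [heq]; exact hstep A hAS _
      · have heq : n = B + 3 * ((n - B) / 3) := by omega
        rw [heq]; exact hstep B hBS _
  -- complement
  have hcompl : Sᶜ = {n : ℕ | n % 3 = 1 ∧ n < A} ∪ {n : ℕ | n % 3 = 2 ∧ n < B} := by
    ext n
    simp only [Set.mem_compl_iff, hchar n, Set.mem_union, Set.mem_setOf_eq]
    omega
  -- genus computation : 3 * g + 3 = A + B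
  have hgAB : 3 * g + 3 = A + B := by
    have hd : Disjoint {n : ℕ | n % 3 = 1 ∧ n < A} {n : ℕ | n % 3 = 2 ∧ n < B} := by
      rw [Set.disjoint_left]
      rintro n ⟨h1, _⟩ ⟨h2, _⟩
      omega
    have hf1 : {n : ℕ | n % 3 = 1 ∧ n < A}.Finite :=
      Set.Finite.subset (Set.finite_Iio A) (fun n hn => hn.2)
    have hf2 : {n : ℕ | n % 3 = 2 ∧ n < B}.Finite :=
      Set.Finite.subset (Set.finite_Iio B) (fun n hn => hn.2)
    have := Set.ncard_union_eq hd hf1 hf2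
    rw [← hcompl, hgen, ncard_res_lt 1 A (Or.inl rfl) hAmod,
      ncard_res_lt 2 B (Or.inr rfl) hBmod] at this
    omega
  -- Frobenius
  have hFnS : F ∉ S := by
    have hne : Sᶜ.Nonempty := by
      refine ⟨A - 3, ?_⟩
      rw [hcompl]
      left; constructor <;> omega
    have := hne.csSup_mem hfin
    rwa [hfrob, Set.mem_compl_iff] at this
  have hA3 : A - 3 ≤ F := by
    have h1 : A - 3 ∉ S := by rw [hchar]; push_neg; omega
    have : A - 3 ≤ sSup Sᶜ := le_csSup hbdd h1
    omega
  have hB3 : B - 3 ≤ F := by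
    have h1 : B - 3 ∉ S := by rw [hchar]; push_neg; omega
    have : B - 3 ≤ sSup Sᶜ := le_csSup hbdd h1
    omega
  have hFc : (F % 3 = 1 ∧ F < A) ∨ (F % 3 = 2 ∧ F < B) := by
    rw [hchar] at hFnS; push_neg at hFnS; omega
  -- S as an AddSubmonoid
  let S' : AddSubmonoid ℕ :=
    { carrier := S
      zero_mem' := h0
      add_mem' := fun {a b} ha hb => hadd a ha b hb }
  -- main equality with A, B
  have key : ∀ x y : ℕ, ({x, y} : Set ℕ) = {A, B} →
      S = (AddSubmonoid.closure {3, x, y} : AddSubmonoid ℕ) := by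
    intro x y hxy
    have hgens : ({3, x, y} : Set ℕ) = {3, A, B} := by
      rw [show ({3, x, y} : Set ℕ) = insert 3 {x, y} from rfl, hxy]
    rw [hgens]
    apply le_antisymm
    · intro n hn
      rw [hchar] at hn
      have m3 : (3 : ℕ) ∈ AddSubmonoid.closure ({3, A, B} : Set ℕ) :=
        AddSubmonoid.subset_closure (by simp)
      have mA : A ∈ AddSubmonoid.closure ({3, A, B} : Set ℕ) :=
        AddSubmonoid.subset_closure (by simp)
      have mB : B ∈ AddSubmonoid.closure ({3, A, B} : Set ℕ) :=
        AddSubmonoid.subset_closure (by simp)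
      rcases hn with h | ⟨h1, h2⟩ | ⟨h1, h2⟩
      · have heq : n = (n / 3) • 3 := by simp only [smul_eq_mul]; omega
        rw [heq]
        exact AddSubmonoid.nsmul_mem _ m3 _
      · have heq : n = A + ((n - A) / 3) • 3 := by simp only [smul_eq_mul]; omega
        rw [heq]
        exact add_mem mA (AddSubmonoid.nsmul_mem _ m3 _)
      · have heq : n = B + ((n - B) / 3) • 3 := by simp only [smul_eq_mul]; omega
        rw [heq]
        exact add_mem mB (AddSubmonoid.nsmul_mem _ m3 _)
    · have hle : AddSubmonoid.closure ({3, A, B} : Set ℕ) ≤ S' := by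
        rw [AddSubmonoid.closure_le]
        rintro n (rfl | rfl | rfl)
        · exact h3S
        · exact hAS
        · exact hBS
      exact fun n hn => hle hn
  rcases hFc with ⟨h1, h2⟩ | ⟨h1, h2⟩
  · -- F = A - 3, so F + 3 = A, 3g - F = B
    have hFA : F + 3 = A := by omega
    have hgF : 3 * g - F = B := by omega
    exact key (F + 3) (3 * g - F) (by rw [hFA, hgF])
  · have hFB : F + 3 = B := by omega
    have hgF : 3 * g - F = A := by omega
    refine key (F + 3) (3 * g - F) ?_
    rw [hFB, hgF, Set.pair_comm]
end

section
/- If S is a maximal embedding dimension numerical semigroup with multiplicity 4, minimal generators 4 < n₂ < n₃ < n₄, Frobenius number F and genus g, then n₄ = F + 4 and n₂ + n₃ = 4g − F + 2. -/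
/-- Counting numbers below `4*q+r` congruent to `r` mod `4`. -/
lemma card_mod_filter (q r : ℕ) (hr : r < 4) :
    ((Finset.range (4 * q + r)).filter (fun x => x % 4 = r)).card = q := by
  induction q with
  | zero =>
    apply Finset.card_eq_zero.mpr
    apply Finset.filter_eq_empty_iff.mpr
    intro x hx
    simp only [Finset.mem_range] at hx
    omega
  | succ q ih =>
    have h1 : 4 * (q + 1) + r = (4 * q + r) + 1 + 1 + 1 + 1 := by omega
    rw [h1, Finset.range_add_one, Finset.range_add_one, Finset.range_add_one, Finset.range_add_one]
    rw [Finset.filter_insert, Finset.filter_insert, Finset.filter_insert, Finset.filter_insert]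
    have e0 : (4 * q + r) % 4 = r := by omega
    have e1 : (4 * q + r + 1) % 4 ≠ r := by omega
    have e2 : (4 * q + r + 1 + 1) % 4 ≠ r := by omega
    have e3 : (4 * q + r + 1 + 1 + 1) % 4 ≠ r := by omega
    rw [if_neg e3, if_neg e2, if_neg e1, if_pos e0,
      Finset.card_insert_of_notMem (by simp), ih]

/-- For a maximal embedding dimension numerical semigroup of multiplicity 4 with
minimal generators `4 < n₂ < n₃ < n₄`, Frobenius number `F` and genus `g`, one
has `n₄ = F + 4` and `n₂ + n₃ = 4g − F + 2`. -/
theorem med_mult_four_generators (S : Set ℕ) (hS : IsNumericalSemigroup S)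
    (hm : sgpMult S = 4) (hmed : IsMED S) (n₂ n₃ n₄ : ℕ)
    (hgens : MinGens S = {4, n₂, n₃, n₄})
    (hlt : 4 < n₂ ∧ n₂ < n₃ ∧ n₃ < n₄) (F g : ℕ)
    (hF : sgpFrob S = F) (hg : sgpGenus S = g) :
    n₄ = F + 4 ∧ (n₂ : ℤ) + n₃ = 4 * g - F + 2 := by
  obtain ⟨h0, hadd, hfin⟩ := hS
  obtain ⟨hl2, hl3, hl4⟩ := hlt
  have hmemg : ∀ x ∈ ({4, n₂, n₃, n₄} : Set ℕ),
      x ∈ S ∧ x ≠ 0 ∧ ∀ a ∈ S \ {0}, ∀ b ∈ S \ {0}, x ≠ a + b := by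
    intro x hx
    rw [← hgens] at hx
    exact ⟨hx.1, hx.2⟩
  have h4 : (4 : ℕ) ∈ S := (hmemg 4 (by simp)).1
  have hstep : ∀ s ∈ S, ∀ k : ℕ, s + 4 * k ∈ S := by
    intro s hs k
    induction k with
    | zero => simpa using hs
    | succ k ih =>
      have := hadd _ ih _ h4
      have he : s + 4 * k + 4 = s + 4 * (k + 1) := by ring
      rwa [he] at this
  -- bound above complement
  obtain ⟨B, hB⟩ := hfin.bddAbove
  have hbig : ∀ x, B < x → x ∈ S := by
    intro x hx
    by_contra hxS
    exact absurd (hB hxS) (by omega)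
  -- the minimal element of S in each residue class
  set w : ℕ → ℕ := fun r => sInf {x ∈ S | x % 4 = r} with hw
  have hwmem : ∀ r < 4, w r ∈ S ∧ w r % 4 = r := by
    intro r hr
    have hne : {x ∈ S | x % 4 = r}.Nonempty := by
      refine ⟨4 * (B + 1) + r, hbig _ (by omega), by omega⟩
    exact Nat.sInf_mem hne
  have hwle : ∀ x ∈ S, w (x % 4) ≤ x := by
    intro x hx
    exact Nat.sInf_le ⟨hx, rfl⟩
  have hmemiff : ∀ x, x ∈ S ↔ w (x % 4) ≤ x := by
    intro x
    refine ⟨hwle x, fun hle => ?_⟩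
    obtain ⟨hwS, hwmod⟩ := hwmem (x % 4) (Nat.mod_lt _ (by omega))
    have hx : x = w (x % 4) + 4 * ((x - w (x % 4)) / 4) := by omega
    rw [hx]
    exact hstep _ hwS _
  have hw0 : w 0 = 0 := Nat.le_zero.mp (Nat.sInf_le ⟨h0, rfl⟩)
  -- generators have nonzero residue and are minimal in their class
  have hkey : ∀ n, n ∈ ({n₂, n₃, n₄} : Set ℕ) → 4 < n →
      n % 4 ≠ 0 ∧ w (n % 4) = n := by
    intro n hn hn4
    obtain ⟨hnS, hn0, hnsum⟩ := hmemg n (by right; exact hn)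
    have hr0 : n % 4 ≠ 0 := by
      intro h
      have hd : n - 4 ∈ S := by
        rw [hmemiff]
        have : (n - 4) % 4 = 0 := by omega
        rw [this, hw0]; omega
      exact hnsum 4 ⟨h4, by simp⟩ (n - 4) ⟨hd, by simp; omega⟩ (by omega)
    refine ⟨hr0, ?_⟩
    obtain ⟨hwS, hwmod⟩ := hwmem (n % 4) (Nat.mod_lt _ (by omega))
    have hle : w (n % 4) ≤ n := hwle n hnS
    rcases eq_or_lt_of_le hle with h | h
    · exact h
    · exfalso
      have hd : n - w (n % 4) ∈ S := by
        rw [hmemiff]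
        have : (n - w (n % 4)) % 4 = 0 := by omega
        rw [this, hw0]; omega
      exact hnsum (w (n % 4)) ⟨hwS, by simp; omega⟩ (n - w (n % 4))
        ⟨hd, by simp; omega⟩ (by omega)
  obtain ⟨ha0, hwa⟩ := hkey n₂ (by simp) (by omega)
  obtain ⟨hb0, hwb⟩ := hkey n₃ (by simp) (by omega)
  obtain ⟨hc0, hwc⟩ := hkey n₄ (by simp) (by omega)
  set a := n₂ % 4 with hadef
  set b := n₃ % 4 with hbdef
  set c := n₄ % 4 with hcdef
  have ha4 : a < 4 := Nat.mod_lt _ (by omega)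
  have hb4 : b < 4 := Nat.mod_lt _ (by omega)
  have hc4 : c < 4 := Nat.mod_lt _ (by omega)
  have hab : a ≠ b := by
    intro h; rw [h, hwb] at hwa; omega
  have hac : a ≠ c := by
    intro h; rw [h, hwc] at hwa; omega
  have hbc : b ≠ c := by
    intro h; rw [h, hwc] at hwb; omega
  -- gap characterization
  have hgap : ∀ x, x ∉ S ↔
      (x % 4 = a ∧ x < n₂) ∨ (x % 4 = b ∧ x < n₃) ∨ (x % 4 = c ∧ x < n₄) := by
    intro x
    rw [hmemiff, not_le]
    have hcases : x % 4 = 0 ∨ x % 4 = a ∨ x % 4 = b ∨ x % 4 = c := by omega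
    rcases hcases with h | h | h | h <;> rw [h]
    · rw [hw0]; omega
    · rw [hwa]; omega
    · rw [hwb]; omega
    · rw [hwc]; omega
  -- Frobenius number
  have hgap4 : n₄ - 4 ∉ S := by
    rw [hgap]
    right; right
    constructor
    · omega
    · omega
  have hFval : F = n₄ - 4 := by
    rw [← hF]
    unfold sgpFrob
    apply le_antisymm
    · apply csSup_le ⟨n₄ - 4, hgap4⟩
      intro x hx
      rw [Set.mem_compl_iff, hgap] at hx
      omega
    · exact le_csSup ⟨n₄ - 4, fun x hx => by rw [Set.mem_compl_iff, hgap] at hx; omega⟩ hgap4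
  -- genus
  have hGu : hfin.toFinset =
      ((Finset.range n₂).filter (fun x => x % 4 = a)) ∪
      ((Finset.range n₃).filter (fun x => x % 4 = b)) ∪
      ((Finset.range n₄).filter (fun x => x % 4 = c)) := by
    ext x
    simp only [Set.Finite.mem_toFinset, Set.mem_compl_iff, Finset.mem_union,
      Finset.mem_filter, Finset.mem_range]
    rw [hgap]
    omega
  have hq2 : n₂ = 4 * (n₂ / 4) + a := by omega
  have hq3 : n₃ = 4 * (n₃ / 4) + b := by omega
  have hq4 : n₄ = 4 * (n₄ / 4) + c := by omega
  have hd1 : Disjoint ((Finset.range n₂).filter (fun x => x % 4 = a))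
      ((Finset.range n₃).filter (fun x => x % 4 = b)) := by
    rw [Finset.disjoint_left]
    intro x hx hx'
    simp only [Finset.mem_filter] at hx hx'
    omega
  have hd2 : Disjoint (((Finset.range n₂).filter (fun x => x % 4 = a)) ∪
      ((Finset.range n₃).filter (fun x => x % 4 = b)))
      ((Finset.range n₄).filter (fun x => x % 4 = c)) := by
    rw [Finset.disjoint_left]
    intro x hx hx'
    simp only [Finset.mem_union, Finset.mem_filter] at hx hx'
    omega
  have hgval : g = n₂ / 4 + n₃ / 4 + n₄ / 4 := by
    rw [← hg]
    unfold sgpGenus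
    rw [Set.ncard_eq_toFinset_card _ hfin]
    rw [hGu, Finset.card_union_of_disjoint hd2, Finset.card_union_of_disjoint hd1]
    rw [hq2, hq3, hq4]
    rw [card_mod_filter _ _ ha4, card_mod_filter _ _ hb4, card_mod_filter _ _ hc4]
    omega
  have habc : a + b + c = 6 := by omega
  constructor
  · omega
  · have h2 : n₂ = 4 * (n₂ / 4) + a := hq2
    have h3 : n₃ = 4 * (n₃ / 4) + b := hq3
    have h4' : n₄ = 4 * (n₄ / 4) + c := hq4
    omega
end
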